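/- arXiv:1805.11687 — 6 statements merged into one kernel-verified Lean document; each statement's English description precedes it below -/
import Mathlib

section
/- Let H and G be real Hilbert spaces and adopt the primal-dual algorithm setting. Then for every integer k ≥ 1 and every primal-dual solution (x̂, û), the following inequality holds: ‖x^k − x̂‖²/τ_k + ‖u^k − û‖²/γ_k ≥ (2ρτ_k + 1)·‖p^{k+1} − x̂‖²/τ_k + (1/τ_k − 1/(2β))·‖p^{k+1} − x^k‖² + (2χγ_k + 1)·‖η^{k+1} − û‖²/γ_k + (1/γ_k − 1/(2δ))·‖η^{k+1} − u^k‖² + 2⟨L(p^{k+1} − x^k), η^{k+1} − û⟩ − 2θ_{k−1}⟨L(p^k − x^{k−1}), η^k − û⟩ − 2θ_{k−1}‖L‖·‖p^k − x^{k−1}‖·‖η^{k+1} − u^k‖. -/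
/-!
Both half-steps of the algorithm are forward-backward steps of the same shape, so one
estimate covers them: test strong monotonicity of `A` (resp. `B`) between the new iterate and
the solution, expand the step term by the three-point identity, and absorb the forward term by
cocoercivity plus Young's inequality. Adding the primal and dual estimates, the coupling terms
`⟪L ·, ·⟫` telescope up to the extrapolation `θ (p k - x (k - 1))` in `xb k`; since `L` maps
into `V`, the projection `u k = P_V (η k)` is invisible to them, and the remaining mismatch
between `η (k + 1)` and `u k` is bounded by `‖L‖`.
-/

open RealInnerProductSpace

section ForwardBackward

variable {E : Type*} [NormedAddCommGroup E] [InnerProductSpace ℝ E]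

theorem neg_inner_le_of_cocoercive {β : ℝ} (hβ : 0 < β) {c x y : E}
    (hc : β * ‖c‖ ^ 2 ≤ ⟪c, x - y⟫) (z : E) :
    -⟪z - y, c⟫ ≤ ‖z - x‖ ^ 2 / (4 * β) := by
  have hsplit : ⟪z - y, c⟫ = ⟪c, x - y⟫ + ⟪z - x, c⟫ := by
    rw [← sub_add_sub_cancel z x y, inner_add_left, real_inner_comm (x - y) c, add_comm]
  have hcs : -(‖z - x‖ * ‖c‖) ≤ ⟪z - x, c⟫ := neg_le_of_abs_le (abs_real_inner_le_norm _ _)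
  rw [le_div_iff₀ (by positivity)]
  -- Young: `‖z - x‖ ‖c‖ ≤ β ‖c‖² + ‖z - x‖² / (4β)`
  nlinarith [sq_nonneg (‖z - x‖ - 2 * β * ‖c‖)]

theorem forward_backward_step_estimate (A : E → Set E) (C : E → E) {ρ β τ : ℝ}
    (hA : ∀ x y u v, u ∈ A x → v ∈ A y → ρ * ‖x - y‖ ^ 2 ≤ ⟪x - y, u - v⟫)
    (hC : ∀ x y, β * ‖C x - C y‖ ^ 2 ≤ ⟪C x - C y, x - y⟫) (hβ : 0 < β) (hτ : 0 < τ)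
    {x p xhat w what : E} (hp : τ⁻¹ • (x - p) - w - C x ∈ A p)
    (hxhat : -what - C xhat ∈ A xhat) :
    (2 * ρ * τ + 1) * ‖p - xhat‖ ^ 2 / τ + (1 / τ - 1 / (2 * β)) * ‖p - x‖ ^ 2
      + 2 * ⟪p - xhat, w - what⟫ ≤ ‖x - xhat‖ ^ 2 / τ := by
  have hmono : ρ * ‖p - xhat‖ ^ 2 ≤
      τ⁻¹ * ⟪p - xhat, x - p⟫ - ⟪p - xhat, w - what⟫ - ⟪p - xhat, C x - C xhat⟫ := by
    convert hA _ _ _ _ hp hxhat using 1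
    simp only [inner_sub_right, inner_neg_right, real_inner_smul_right]
    ring
  have hthree : ‖x - xhat‖ ^ 2 = ‖p - xhat‖ ^ 2 + 2 * ⟪p - xhat, x - p⟫ + ‖p - x‖ ^ 2 := by
    rw [norm_sub_rev p x, ← norm_add_sq_real, sub_add_sub_cancel']
  have hforward := neg_inner_le_of_cocoercive hβ (hC x xhat) p
  have hthree_scaled : τ⁻¹ * ⟪p - xhat, x - p⟫ =
      (τ⁻¹ * ‖x - xhat‖ ^ 2 - τ⁻¹ * ‖p - xhat‖ ^ 2 - τ⁻¹ * ‖p - x‖ ^ 2) / 2 := by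
    rw [hthree]; ring
  have hcoeff : (2 * ρ * τ + 1) * ‖p - xhat‖ ^ 2 / τ
      = 2 * ρ * ‖p - xhat‖ ^ 2 + τ⁻¹ * ‖p - xhat‖ ^ 2 := by
    field_simp
  have hforward_coeff : ‖p - x‖ ^ 2 / (4 * β) = (2 * β)⁻¹ * ‖p - x‖ ^ 2 / 2 := by
    field_simp; ring
  rw [hcoeff, one_div, one_div, div_eq_inv_mul]
  linarith

end ForwardBackward

theorem inner_le_inner_add_opNorm_mul {H G : Type*}
    [NormedAddCommGroup H] [InnerProductSpace ℝ H] [NormedAddCommGroup G] [InnerProductSpace ℝ G]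
    (L : H →L[ℝ] G) (z : H) (a b : G) :
    ⟪L z, a⟫ ≤ ⟪L z, b⟫ + ‖L‖ * ‖z‖ * ‖a - b‖ := by
  calc ⟪L z, a⟫ = ⟪L z, b⟫ + ⟪L z, a - b⟫ := by rw [← inner_add_right, add_sub_cancel]
    _ ≤ ⟪L z, b⟫ + ‖L z‖ * ‖a - b‖ := by gcongr; exact real_inner_le_norm _ _
    _ ≤ ⟪L z, b⟫ + ‖L‖ * ‖z‖ * ‖a - b‖ := by gcongr; exact L.le_opNorm z

theorem Submodule.inner_orthogonalProjectionOnto_sub_of_mem {G : Type*}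
    [NormedAddCommGroup G] [InnerProductSpace ℝ G] (V : Submodule ℝ G) [V.HasOrthogonalProjection]
    {v : G} (hv : v ∈ V) (η w : G) :
    ⟪v, (V.orthogonalProjectionOnto η : G) - w⟫ = ⟪v, η - w⟫ := by
  rw [inner_sub_right, inner_sub_right,
    ← V.inner_orthogonalProjectionOnto_eq_of_mem_left ⟨v, hv⟩ η]
  rfl

theorem stmt_0_general {H G : Type*}
    [NormedAddCommGroup H] [InnerProductSpace ℝ H] [CompleteSpace H]
    [NormedAddCommGroup G] [InnerProductSpace ℝ G] [CompleteSpace G]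
    (V : Submodule ℝ G) [CompleteSpace V]
    (L : H →L[ℝ] G) (hran : ∀ z, L z ∈ V)
    (ρ χ β δ : ℝ) (hβ : 0 < β) (hδ : 0 < δ)
    (A : H → Set H)
    (hA : ∀ x y u v, u ∈ A x → v ∈ A y → ρ * ‖x - y‖ ^ 2 ≤ ⟪x - y, u - v⟫)
    (B : G → Set G)
    (hB : ∀ x y u v, u ∈ B x → v ∈ B y → χ * ‖x - y‖ ^ 2 ≤ ⟪x - y, u - v⟫)
    (C : H → H) (hC : ∀ x y, β * ‖C x - C y‖ ^ 2 ≤ ⟪C x - C y, x - y⟫)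
    (D : G → G) (hD : ∀ x y, δ * ‖D x - D y‖ ^ 2 ≤ ⟪D x - D y, x - y⟫)
    (T : H → H)
    (θ τ' γ' : ℕ → ℝ)
    (hθ : ∀ k, θ k ∈ Set.Ioc (0 : ℝ) 1)
    (hτ' : ∀ k, τ' k ∈ Set.Ioo (0 : ℝ) (2 * β))
    (hγ' : ∀ k, γ' k ∈ Set.Ioo (0 : ℝ) (2 * δ))
    (x p xb : ℕ → H) (u η : ℕ → G)
    (halg1 : ∀ k, (γ' k)⁻¹ • (u k - η (k + 1)) + L (xb k) - D (u k) ∈ B (η (k + 1)))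
    (halg2 : ∀ k, u (k + 1) = (V.orthogonalProjectionOnto (η (k + 1)) : G))
    (halg3 : ∀ k, (τ' k)⁻¹ • (x k - p (k + 1))
        - (ContinuousLinearMap.adjoint L) (u (k + 1)) - C (x k) ∈ A (p (k + 1)))
    (halg5 : ∀ k, xb (k + 1) = x (k + 1) + θ k • (p (k + 1) - x k)) :
    ∀ k : ℕ, 1 ≤ k → ∀ (xhat : H) (uhat : G), T xhat = xhat → uhat ∈ V →
      -(ContinuousLinearMap.adjoint L) uhat - C xhat ∈ A xhat →
      L xhat - D uhat ∈ B uhat →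
      ‖x k - xhat‖ ^ 2 / τ' k + ‖u k - uhat‖ ^ 2 / γ' k ≥
        (2 * ρ * τ' k + 1) * ‖p (k + 1) - xhat‖ ^ 2 / τ' k
        + (1 / τ' k - 1 / (2 * β)) * ‖p (k + 1) - x k‖ ^ 2
        + (2 * χ * γ' k + 1) * ‖η (k + 1) - uhat‖ ^ 2 / γ' k
        + (1 / γ' k - 1 / (2 * δ)) * ‖η (k + 1) - u k‖ ^ 2
        + 2 * ⟪L (p (k + 1) - x k), η (k + 1) - uhat⟫
        - 2 * θ (k - 1) * ⟪L (p k - x (k - 1)), η k - uhat⟫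
        - 2 * θ (k - 1) * ‖L‖ * ‖p k - x (k - 1)‖ * ‖η (k + 1) - u k‖ := by
  intro k hk xhat uhat _ _ hAsol hBsol
  obtain ⟨m, rfl⟩ := Nat.exists_eq_add_of_le' hk
  rw [Nat.add_sub_cancel]
  have hproj (z : H) (n : ℕ) : ⟪L z, u (n + 1) - uhat⟫ = ⟪L z, η (n + 1) - uhat⟫ := by
    rw [halg2]; exact V.inner_orthogonalProjectionOnto_sub_of_mem (hran z) _ _
  have hprimal := forward_backward_step_estimate A C hA hC hβ (hτ' _).1 (halg3 (m + 1)) hAsol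
  rw [← map_sub, ContinuousLinearMap.adjoint_inner_right, hproj] at hprimal
  have hdual := forward_backward_step_estimate B D hB hD hδ (hγ' _).1
    (w := -L (xb (m + 1))) (what := -L xhat)
    (by simpa only [sub_neg_eq_add] using halg1 (m + 1)) (by rwa [neg_neg])
  have hcoupling : ⟪η (m + 1 + 1) - uhat, -L (xb (m + 1)) - -L xhat⟫
      + ⟪L (p (m + 1 + 1) - xhat), η (m + 1 + 1) - uhat⟫
      = ⟪L (p (m + 1 + 1) - x (m + 1)), η (m + 1 + 1) - uhat⟫
        - θ m * ⟪L (p (m + 1) - x m), η (m + 1 + 1) - uhat⟫ := by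
    rw [halg5 m]
    simp only [map_add, map_sub, map_smul, inner_sub_left, inner_add_right, inner_sub_right,
      inner_neg_right, real_inner_smul_right, real_inner_comm (L _)]
    ring
  have hextrapolation := mul_le_mul_of_nonneg_left
    (inner_le_inner_add_opNorm_mul L (p (m + 1) - x m) (η (m + 1 + 1) - uhat) (u (m + 1) - uhat))
    (hθ m).1.le
  rw [sub_sub_sub_cancel_right, hproj] at hextrapolation
  linarith

/-- Theorem 3.2(i): the fundamental one-iteration inequality of the projected
primal-dual algorithm. -/
theorem stmt_0 {H G : Type*}
    [NormedAddCommGroup H] [InnerProductSpace ℝ H] [CompleteSpace H]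
    [NormedAddCommGroup G] [InnerProductSpace ℝ G] [CompleteSpace G]
    (V : Submodule ℝ G) [CompleteSpace V]
    (L : H →L[ℝ] G) (hL0 : L ≠ 0) (hran : ∀ z, L z ∈ V)
    (ρ χ β δ : ℝ) (hρ : 0 ≤ ρ) (hχ : 0 ≤ χ) (hβ : 0 < β) (hδ : 0 < δ)
    (A : H → Set H)
    (hA : ∀ x y u v, u ∈ A x → v ∈ A y → ρ * ‖x - y‖ ^ 2 ≤ ⟪x - y, u - v⟫)
    (B : G → Set G)
    (hB : ∀ x y u v, u ∈ B x → v ∈ B y → χ * ‖x - y‖ ^ 2 ≤ ⟪x - y, u - v⟫)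
    (C : H → H) (hC : ∀ x y, β * ‖C x - C y‖ ^ 2 ≤ ⟪C x - C y, x - y⟫)
    (D : G → G) (hD : ∀ x y, δ * ‖D x - D y‖ ^ 2 ≤ ⟪D x - D y, x - y⟫)
    (α : ℝ) (hα : α ∈ Set.Ioo (0 : ℝ) 1)
    (T : H → H) (hTfix : ∃ z, T z = z)
    (hT : ∀ z y, T y = y → ‖T z - y‖ ^ 2 ≤ ‖z - y‖ ^ 2 - ((1 - α) / α) * ‖z - T z‖ ^ 2)
    (θ τ' γ' : ℕ → ℝ)
    (hθ : ∀ k, θ k ∈ Set.Ioc (0 : ℝ) 1)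
    (hτ' : ∀ k, τ' k ∈ Set.Ioo (0 : ℝ) (2 * β))
    (hγ' : ∀ k, γ' k ∈ Set.Ioo (0 : ℝ) (2 * δ))
    (x p xb : ℕ → H) (u η : ℕ → G)
    (hxb0 : xb 0 = x 0)
    (halg1 : ∀ k, (γ' k)⁻¹ • (u k - η (k + 1)) + L (xb k) - D (u k) ∈ B (η (k + 1)))
    (halg2 : ∀ k, u (k + 1) = (V.orthogonalProjectionOnto (η (k + 1)) : G))
    (halg3 : ∀ k, (τ' k)⁻¹ • (x k - p (k + 1))
        - (ContinuousLinearMap.adjoint L) (u (k + 1)) - C (x k) ∈ A (p (k + 1)))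
    (halg4 : ∀ k, x (k + 1) = T (p (k + 1)))
    (halg5 : ∀ k, xb (k + 1) = x (k + 1) + θ k • (p (k + 1) - x k)) :
    ∀ k : ℕ, 1 ≤ k → ∀ (xhat : H) (uhat : G), T xhat = xhat → uhat ∈ V →
      -(ContinuousLinearMap.adjoint L) uhat - C xhat ∈ A xhat →
      L xhat - D uhat ∈ B uhat →
      ‖x k - xhat‖ ^ 2 / τ' k + ‖u k - uhat‖ ^ 2 / γ' k ≥
        (2 * ρ * τ' k + 1) * ‖p (k + 1) - xhat‖ ^ 2 / τ' k
        + (1 / τ' k - 1 / (2 * β)) * ‖p (k + 1) - x k‖ ^ 2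
        + (2 * χ * γ' k + 1) * ‖η (k + 1) - uhat‖ ^ 2 / γ' k
        + (1 / γ' k - 1 / (2 * δ)) * ‖η (k + 1) - u k‖ ^ 2
        + 2 * ⟪L (p (k + 1) - x k), η (k + 1) - uhat⟫
        - 2 * θ (k - 1) * ⟪L (p k - x (k - 1)), η k - uhat⟫
        - 2 * θ (k - 1) * ‖L‖ * ‖p k - x (k - 1)‖ * ‖η (k + 1) - u k‖ :=
  stmt_0_general V L hran ρ χ β δ hβ hδ A hA B hB C hC D hD T θ τ' γ' hθ hτ' hγ' x p xb u η halg1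
    halg2 halg3 halg5
end

section
/- Let H and G be real Hilbert spaces and adopt the primal-dual algorithm setting with ρ > 0 and χ > 0. Define μ = 2√(ρχ)/‖L‖ and α = min{ μρ/(ρ + μ/(4β)), μχ/(χ + μ/(4δ)) }. Suppose θ_k ≡ θ with θ ∈ (1/(1+α), 1], τ_k ≡ τ = 2βμ/(μ + 4βρ), γ_k ≡ γ = 2μδ/(μ + 4δχ), and set ω = (1+θ)/(2+α). Then ω ∈ [1/(1+α), θ) and for every primal-dual solution (x̂, û) and every k ∈ ℕ: (χ(1−ω) + μ/(4δ))‖u^k − û‖² + (ρ + μ/(4β))‖x^k − x̂‖² ≤ ω^k·( (χ + μ/(4δ))‖u⁰ − û‖² + (ρ + μ/(4β))‖x⁰ − x̂‖² ); in particular the iterates converge linearly. -/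
/-!
With `σ = ρ + μ/(4β)` and `κ = χ + μ/(4δ)`, the step sizes are chosen so that `μ/τ = 2σ` and
`μ/γ = 2κ`. Multiplied by `μ`, the primal and dual steps are forward–backward steps: strong
monotonicity of `A`, `B` and cocoercivity of `C`, `D` give a descent inequality for
`σ‖x - x̂‖² + κ‖u - û‖²`, and `T` and `P_V` only shrink distances to the solution. What remains is
the coupling `μ⟪L (x̄ - p), u - û⟫`. Since `μ‖L‖ = 2√(ρχ)`, Cauchy–Schwarz and AM–GM bound
`μ⟪L w, z⟫` by `ρ‖w‖² + χ‖z‖²`. Keeping the primal increment `p - x` inside the Lyapunov function,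
the extrapolation `x̄ - x = θ (p - x)` is paid for by the next step, and the Lyapunov function
contracts by the factor `ω` while dominating the left-hand side of the estimate.
-/

open RealInnerProductSpace

theorem norm_apply_sub_le_of_averaged {E : Type*} [SeminormedAddCommGroup E] {T : E → E}
    {a : ℝ} (ha₀ : 0 ≤ a) (ha₁ : a ≤ 1)
    (hT : ∀ z y, T y = y → ‖T z - y‖ ^ 2 ≤ ‖z - y‖ ^ 2 - ((1 - a) / a) * ‖z - T z‖ ^ 2)
    {y : E} (hy : T y = y) (z : E) : ‖T z - y‖ ≤ ‖z - y‖ := by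
  have : 0 ≤ (1 - a) / a * ‖z - T z‖ ^ 2 := by
    have := sub_nonneg.2 ha₁
    positivity
  exact (pow_le_pow_iff_left₀ (norm_nonneg _) (norm_nonneg _) two_ne_zero).1
    (by linarith [hT z y hy])

theorem div_two_add_mem_Ico {α θ : ℝ} (hα : 0 < α) (hθ : 1 / (1 + α) < θ) :
    (1 + θ) / (2 + α) ∈ Set.Ico (1 / (1 + α)) θ := by
  rw [div_lt_iff₀ (by positivity)] at hθ
  constructor
  · rw [div_le_div_iff₀ (by positivity) (by positivity)]
    linarith
  · rw [div_lt_iff₀ (by positivity)]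
    linarith

section InnerProductSpace

variable {E F : Type*} [NormedAddCommGroup E] [InnerProductSpace ℝ E]
  [NormedAddCommGroup F] [InnerProductSpace ℝ F]

theorem two_mul_inner_sub_sub (a b c : E) :
    2 * ⟪a - c, b - a⟫ = ‖b - c‖ ^ 2 - ‖a - c‖ ^ 2 - ‖a - b‖ ^ 2 := by
  rw [show b - c = (b - a) + (a - c) by abel, norm_add_sq_real, norm_sub_rev a b,
    real_inner_comm]
  ring

theorem norm_smul_add_smul_sq_le {s t : ℝ} (hs : 0 ≤ s) (ht : 0 ≤ t) (hst : s + t ≤ 1)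
    (a b : E) : ‖s • a + t • b‖ ^ 2 ≤ s * ‖a‖ ^ 2 + t * ‖b‖ ^ 2 := by
  have hab : ⟪a, b⟫ ≤ ‖a‖ * ‖b‖ := real_inner_le_norm a b
  rw [norm_add_sq_real, norm_smul, norm_smul, real_inner_smul_left, real_inner_smul_right,
    Real.norm_of_nonneg hs, Real.norm_of_nonneg ht]
  nlinarith [mul_nonneg (mul_nonneg hs ht) (sq_nonneg (‖a‖ - ‖b‖)),
    mul_nonneg (mul_nonneg hs ht) (sub_nonneg.2 hab),
    mul_nonneg (mul_nonneg hs (sub_nonneg.2 hst)) (sq_nonneg ‖a‖),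
    mul_nonneg (mul_nonneg ht (sub_nonneg.2 hst)) (sq_nonneg ‖b‖)]

theorem norm_starProjection_sub_le (V : Submodule ℝ E) [V.HasOrthogonalProjection] (v : E)
    {w : E} (hw : w ∈ V) : ‖V.starProjection v - w‖ ≤ ‖v - w‖ := by
  simpa [Submodule.starProjection_eq_self_iff.2 hw] using V.norm_starProjection_apply_le (v - w)

theorem mul_inner_apply_le (L : E →L[ℝ] F) {ρ χ μ : ℝ} (hρ : 0 < ρ) (hμ : 0 ≤ μ)
    (hL : (μ * ‖L‖) ^ 2 ≤ 4 * ρ * χ) (w : E) (z : F) :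
    μ * ⟪L w, z⟫ ≤ ρ * ‖w‖ ^ 2 + χ * ‖z‖ ^ 2 := by
  have hCS : ⟪L w, z⟫ ≤ ‖L‖ * ‖w‖ * ‖z‖ :=
    (real_inner_le_norm _ _).trans (mul_le_mul_of_nonneg_right (L.le_opNorm w) (norm_nonneg z))
  have hAMGM : μ * ‖L‖ * ‖w‖ * ‖z‖ ≤ ρ * ‖w‖ ^ 2 + χ * ‖z‖ ^ 2 := by
    nlinarith [sq_nonneg (2 * ρ * ‖w‖ - μ * ‖L‖ * ‖z‖), sq_nonneg ‖z‖]
  nlinarith [mul_le_mul_of_nonneg_left hCS hμ]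

theorem forwardBackward_descent {ρ β s : ℝ} (hβ : 0 < β) {p q x w c : E}
    (hmono : ρ * ‖p - q‖ ^ 2 ≤ ⟪p - q, s • (x - p) - w - c⟫)
    (hcoco : β * ‖c‖ ^ 2 ≤ ⟪c, x - q⟫) :
    (ρ + s / 2) * ‖p - q‖ ^ 2 + (s / 2 - 1 / (4 * β)) * ‖p - x‖ ^ 2
      ≤ s / 2 * ‖x - q‖ ^ 2 - ⟪p - q, w⟫ := by
  have hsplit : ⟪p - q, c⟫ = ⟪x - q, c⟫ + ⟪p - x, c⟫ := by
    rw [← inner_add_left, sub_add_sub_cancel']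
  have hc : -(1 / (4 * β)) * ‖p - x‖ ^ 2 ≤ ⟪p - q, c⟫ := by
    have hpx := neg_le_of_abs_le (abs_real_inner_le_norm (p - x) c)
    have hsq : β * ‖c‖ ^ 2 - ‖p - x‖ * ‖c‖ + 1 / (4 * β) * ‖p - x‖ ^ 2
        = (2 * β * ‖c‖ - ‖p - x‖) ^ 2 / (4 * β) := by
      field_simp; ring
    have : 0 ≤ (2 * β * ‖c‖ - ‖p - x‖) ^ 2 / (4 * β) := by positivity
    rw [real_inner_comm] at hcoco
    linarith
  rw [inner_sub_right, inner_sub_right, real_inner_smul_right] at hmono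
  linear_combination hmono + hc + (s / 2) * two_mul_inner_sub_sub p x q

/-- `θ z' - ω z = ω (z' - z) + (θ - ω) z' + (1 - θ) 0` is a convex combination. -/
theorem cross_term_le (L : E →L[ℝ] F) {ρ χ κ μ θ ω : ℝ} (hρ : 0 < ρ) (hμ : 0 ≤ μ)
    (hL : (μ * ‖L‖) ^ 2 ≤ 4 * ρ * χ) (hω : 0 ≤ ω) (hωθ : ω ≤ θ) (hθ : θ ≤ 1) (hχκ : χ ≤ κ)
    (w : E) (z z' : F) :
    ω * (θ * (μ * ⟪L w, z'⟫))
      ≤ ω * (ω * (ρ * ‖w‖ ^ 2 + μ * ⟪L w, z⟫)) + ω * (χ * ‖z' - z‖ ^ 2)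
        + (θ - ω) * (κ * ‖z'‖ ^ 2) := by
  have hχ : 0 ≤ χ := by nlinarith [sq_nonneg (μ * ‖L‖)]
  have hYoung := mul_inner_apply_le L hρ hμ hL (ω • w) (θ • z' - ω • z)
  have hconv := norm_smul_add_smul_sq_le hω (sub_nonneg.2 hωθ) (by linarith) (z' - z) z'
  rw [show ω • (z' - z) + (θ - ω) • z' = θ • z' - ω • z by module] at hconv
  rw [map_smul, real_inner_smul_left, inner_sub_right, real_inner_smul_right,
    real_inner_smul_right, norm_smul, Real.norm_of_nonneg hω] at hYoung
  nlinarith [mul_le_mul_of_nonneg_left hconv hχ,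
    mul_le_mul_of_nonneg_left hχκ (mul_nonneg (sub_nonneg.2 hωθ) (sq_nonneg ‖z'‖))]

end InnerProductSpace

namespace PrimalDual

open ContinuousLinearMap

variable {H G : Type*} [NormedAddCommGroup H] [InnerProductSpace ℝ H]
  [NormedAddCommGroup G] [InnerProductSpace ℝ G] (L : H →L[ℝ] G)

theorem primal_descent [CompleteSpace H] [CompleteSpace G] {A : H → Set H} {C : H → H}
    {ρ β μ σ τ : ℝ}
    (hA : ∀ x y u v, u ∈ A x → v ∈ A y → ρ * ‖x - y‖ ^ 2 ≤ ⟪x - y, u - v⟫)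
    (hC : ∀ x y, β * ‖C x - C y‖ ^ 2 ≤ ⟪C x - C y, x - y⟫)
    (hβ : 0 < β) (hμ : 0 ≤ μ) (hσ : σ = ρ + μ / (4 * β)) (hτ : μ * τ⁻¹ = 2 * σ)
    {x p xhat : H} {u uhat : G}
    (hp : τ⁻¹ • (x - p) - adjoint L u - C x ∈ A p)
    (hxhat : -adjoint L uhat - C xhat ∈ A xhat) :
    (μ * ρ + σ) * ‖p - xhat‖ ^ 2 + ρ * ‖p - x‖ ^ 2
      ≤ σ * ‖x - xhat‖ ^ 2 - μ * ⟪L (p - xhat), u - uhat⟫ := by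
  have hmono := hA _ _ _ _ hp hxhat
  rw [show τ⁻¹ • (x - p) - adjoint L u - C x - (-adjoint L uhat - C xhat)
      = τ⁻¹ • (x - p) - adjoint L (u - uhat) - (C x - C xhat) by rw [map_sub]; abel] at hmono
  have hfb := forwardBackward_descent hβ hmono (hC x xhat)
  rw [adjoint_inner_right] at hfb
  linear_combination μ * hfb + (‖x - xhat‖ ^ 2 / 2 - ‖p - xhat‖ ^ 2 / 2 - ‖p - x‖ ^ 2 / 2) * hτ
    - ‖p - x‖ ^ 2 * hσ

theorem dual_descent {B : G → Set G} {D : G → G} {χ δ μ κ γ : ℝ}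
    (hB : ∀ x y u v, u ∈ B x → v ∈ B y → χ * ‖x - y‖ ^ 2 ≤ ⟪x - y, u - v⟫)
    (hD : ∀ x y, δ * ‖D x - D y‖ ^ 2 ≤ ⟪D x - D y, x - y⟫)
    (hδ : 0 < δ) (hμ : 0 ≤ μ) (hκ : κ = χ + μ / (4 * δ)) (hγ : μ * γ⁻¹ = 2 * κ)
    (V : Submodule ℝ G) [V.HasOrthogonalProjection] (hran : ∀ z, L z ∈ V)
    {u η uhat : G} {xb xhat : H}
    (hη : γ⁻¹ • (u - η) + L xb - D u ∈ B η) (huhat : L xhat - D uhat ∈ B uhat) :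
    (μ * χ + κ) * ‖η - uhat‖ ^ 2 + χ * ‖η - u‖ ^ 2
      ≤ κ * ‖u - uhat‖ ^ 2 + μ * ⟪L (xb - xhat), V.starProjection η - uhat⟫ := by
  have hmono := hB _ _ _ _ hη huhat
  rw [show γ⁻¹ • (u - η) + L xb - D u - (L xhat - D uhat)
      = γ⁻¹ • (u - η) - -L (xb - xhat) - (D u - D uhat) by rw [map_sub]; abel] at hmono
  have hfb := forwardBackward_descent hδ hmono (hD u uhat)
  -- `L (xb - xhat) ∈ V` is orthogonal to `η - P_V η`
  have hperp : ⟪η - uhat, L (xb - xhat)⟫ = ⟪L (xb - xhat), V.starProjection η - uhat⟫ := by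
    rw [real_inner_comm, ← sub_add_sub_cancel η (V.starProjection η) uhat, inner_add_right,
      real_inner_comm, V.starProjection_inner_eq_zero η _ (hran _), zero_add]
  rw [inner_neg_right, sub_neg_eq_add, hperp] at hfb
  linear_combination μ * hfb + (‖u - uhat‖ ^ 2 / 2 - ‖η - uhat‖ ^ 2 / 2 - ‖η - u‖ ^ 2 / 2) * hγ
    - ‖η - u‖ ^ 2 * hκ

theorem iterate_descent [CompleteSpace H] [CompleteSpace G]
    {A : H → Set H} {B : G → Set G} {C : H → H} {D : G → G}
    {ρ χ β δ μ σ κ τ γ : ℝ}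
    (hA : ∀ x y u v, u ∈ A x → v ∈ A y → ρ * ‖x - y‖ ^ 2 ≤ ⟪x - y, u - v⟫)
    (hB : ∀ x y u v, u ∈ B x → v ∈ B y → χ * ‖x - y‖ ^ 2 ≤ ⟪x - y, u - v⟫)
    (hC : ∀ x y, β * ‖C x - C y‖ ^ 2 ≤ ⟪C x - C y, x - y⟫)
    (hD : ∀ x y, δ * ‖D x - D y‖ ^ 2 ≤ ⟪D x - D y, x - y⟫)
    (hρ : 0 ≤ ρ) (hχ : 0 ≤ χ) (hβ : 0 < β) (hδ : 0 < δ) (hμ : 0 ≤ μ)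
    (hσ : σ = ρ + μ / (4 * β)) (hκ : κ = χ + μ / (4 * δ))
    (hτ : μ * τ⁻¹ = 2 * σ) (hγ : μ * γ⁻¹ = 2 * κ)
    (V : Submodule ℝ G) [V.HasOrthogonalProjection] (hran : ∀ z, L z ∈ V)
    {x xb p x' xhat : H} {u η u' uhat : G}
    (hη : γ⁻¹ • (u - η) + L xb - D u ∈ B η) (hu' : u' = V.starProjection η)
    (hp : τ⁻¹ • (x - p) - adjoint L u' - C x ∈ A p) (hx' : ‖x' - xhat‖ ≤ ‖p - xhat‖)
    (huhat : uhat ∈ V) (hxhatA : -adjoint L uhat - C xhat ∈ A xhat)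
    (huhatB : L xhat - D uhat ∈ B uhat) :
    (μ * ρ + σ) * ‖x' - xhat‖ ^ 2 + (μ * χ + κ) * ‖u' - uhat‖ ^ 2 + χ * ‖η - u‖ ^ 2
        + ρ * ‖p - x‖ ^ 2 + μ * ⟪L (p - x), u' - uhat⟫
      ≤ σ * ‖x - xhat‖ ^ 2 + κ * ‖u - uhat‖ ^ 2 + μ * ⟪L (xb - x), u' - uhat⟫ := by
  have hprimal := primal_descent L hA hC hβ hμ hσ hτ hp hxhatA
  have hdual := dual_descent L hB hD hδ hμ hκ hγ V hran hη huhatB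
  rw [← hu'] at hdual
  have hσ₀ : 0 ≤ μ * ρ + σ := by rw [hσ]; positivity
  have hκ₀ : 0 ≤ μ * χ + κ := by rw [hκ]; positivity
  have hx'sq := pow_le_pow_left₀ (norm_nonneg _) hx' 2
  have hu'sq := pow_le_pow_left₀ (norm_nonneg _) (hu' ▸ norm_starProjection_sub_le V η huhat) 2
  have hcross : ⟪L (xb - xhat), u' - uhat⟫ - ⟪L (p - xhat), u' - uhat⟫
      = ⟪L (xb - x), u' - uhat⟫ - ⟪L (p - x), u' - uhat⟫ := by
    rw [← inner_sub_left, ← inner_sub_left, ← map_sub, ← map_sub, sub_sub_sub_cancel_right,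
      sub_sub_sub_cancel_right]
  linear_combination hprimal + hdual + (μ * ρ + σ) * hx'sq + (μ * χ + κ) * hu'sq + μ * hcross

variable (ρ μ σ κ θ ω : ℝ) (x p : ℕ → H) (u : ℕ → G) (xhat : H) (uhat : G)

/-- The primal increment `p (n + 1) - x n` is kept because, scaled by `θ`, it is the
extrapolation `xb (n + 1) - x (n + 1)` of the next step. -/
def lyapunov (n : ℕ) : ℝ :=
  (1 + θ - ω) * σ * ‖x (n + 1) - xhat‖ ^ 2 + κ * ‖u (n + 1) - uhat‖ ^ 2
    + ω * (ρ * ‖p (n + 1) - x n‖ ^ 2 + μ * ⟪L (p (n + 1) - x n), u (n + 1) - uhat⟫)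

variable {L ρ μ σ κ θ ω x p u xhat uhat} {χ : ℝ} {xb : ℕ → H} {η : ℕ → G}

theorem lyapunov_add_le (hω : 0 ≤ ω) (hσω : (1 + θ - ω) * σ ≤ ω * (μ * ρ + σ))
    (hκω : (1 + θ - ω) * κ ≤ ω * (μ * χ + κ)) (n : ℕ)
    (hiter : (μ * ρ + σ) * ‖x (n + 1) - xhat‖ ^ 2 + (μ * χ + κ) * ‖u (n + 1) - uhat‖ ^ 2
        + χ * ‖η (n + 1) - u n‖ ^ 2 + ρ * ‖p (n + 1) - x n‖ ^ 2
        + μ * ⟪L (p (n + 1) - x n), u (n + 1) - uhat⟫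
      ≤ σ * ‖x n - xhat‖ ^ 2 + κ * ‖u n - uhat‖ ^ 2
        + μ * ⟪L (xb n - x n), u (n + 1) - uhat⟫) :
    lyapunov L ρ μ σ κ θ ω x p u xhat uhat n + (θ - ω) * κ * ‖u (n + 1) - uhat‖ ^ 2
        + ω * χ * ‖η (n + 1) - u n‖ ^ 2
      ≤ ω * (σ * ‖x n - xhat‖ ^ 2 + κ * ‖u n - uhat‖ ^ 2
        + μ * ⟪L (xb n - x n), u (n + 1) - uhat⟫) := by
  unfold lyapunov
  linear_combination ω * hiter + ‖x (n + 1) - xhat‖ ^ 2 * hσω + ‖u (n + 1) - uhat‖ ^ 2 * hκω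

theorem lyapunov_zero_le (hχ : 0 ≤ χ) (hχκ : χ ≤ κ) (hω : 0 ≤ ω) (hωθ : ω ≤ θ)
    (hxb : xb 0 = x 0)
    (hstep : lyapunov L ρ μ σ κ θ ω x p u xhat uhat 0 + (θ - ω) * κ * ‖u 1 - uhat‖ ^ 2
        + ω * χ * ‖η 1 - u 0‖ ^ 2
      ≤ ω * (σ * ‖x 0 - xhat‖ ^ 2 + κ * ‖u 0 - uhat‖ ^ 2
        + μ * ⟪L (xb 0 - x 0), u 1 - uhat⟫)) :
    lyapunov L ρ μ σ κ θ ω x p u xhat uhat 0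
      ≤ ω * (σ * ‖x 0 - xhat‖ ^ 2 + κ * ‖u 0 - uhat‖ ^ 2) := by
  rw [hxb, sub_self, map_zero, inner_zero_left, mul_zero, add_zero] at hstep
  have : 0 ≤ (θ - ω) * κ * ‖u 1 - uhat‖ ^ 2 := by
    have := sub_nonneg.2 hωθ
    have := hχ.trans hχκ
    positivity
  nlinarith [mul_nonneg (mul_nonneg hω hχ) (sq_nonneg ‖η 1 - u 0‖)]

theorem lyapunov_succ_le (hρ : 0 < ρ) (hμ : 0 ≤ μ) (hL : (μ * ‖L‖) ^ 2 ≤ 4 * ρ * χ)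
    (hσ : 0 ≤ σ) (hχ : 0 ≤ χ) (hχκ : χ ≤ κ) (hω : 0 ≤ ω) (hωθ : ω ≤ θ) (hθ : θ ≤ 1) (n : ℕ)
    (hxb : xb (n + 1) = x (n + 1) + θ • (p (n + 1) - x n))
    (hu : ‖u (n + 2) - u (n + 1)‖ ≤ ‖η (n + 2) - u (n + 1)‖)
    (hstep : lyapunov L ρ μ σ κ θ ω x p u xhat uhat (n + 1)
        + (θ - ω) * κ * ‖u (n + 2) - uhat‖ ^ 2 + ω * χ * ‖η (n + 2) - u (n + 1)‖ ^ 2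
      ≤ ω * (σ * ‖x (n + 1) - xhat‖ ^ 2 + κ * ‖u (n + 1) - uhat‖ ^ 2
        + μ * ⟪L (xb (n + 1) - x (n + 1)), u (n + 2) - uhat⟫)) :
    lyapunov L ρ μ σ κ θ ω x p u xhat uhat (n + 1)
      ≤ ω * lyapunov L ρ μ σ κ θ ω x p u xhat uhat n := by
  have hcross := cross_term_le L hρ hμ hL hω hωθ hθ hχκ (p (n + 1) - x n)
    (u (n + 1) - uhat) (u (n + 2) - uhat)
  rw [sub_sub_sub_cancel_right] at hcross
  rw [hxb, add_sub_cancel_left, map_smul, real_inner_smul_left] at hstep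
  have hu2 := mul_le_mul_of_nonneg_left (pow_le_pow_left₀ (norm_nonneg _) hu 2)
    (mul_nonneg hω hχ)
  have hσX : 0 ≤ ω * (θ - ω) * σ * ‖x (n + 1) - xhat‖ ^ 2 := by
    have := sub_nonneg.2 hωθ
    positivity
  unfold lyapunov at hstep ⊢
  linarith

theorem le_lyapunov (hρ : 0 < ρ) (hμ : 0 ≤ μ) (hL : (μ * ‖L‖) ^ 2 ≤ 4 * ρ * χ) (hσ : 0 ≤ σ)
    (hω : 0 ≤ ω) (hωθ : ω ≤ θ) (n : ℕ) :
    (κ - ω * χ) * ‖u (n + 1) - uhat‖ ^ 2 + σ * ‖x (n + 1) - xhat‖ ^ 2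
      ≤ lyapunov L ρ μ σ κ θ ω x p u xhat uhat n := by
  have hE := mul_inner_apply_le L hρ hμ hL (p (n + 1) - x n) (-(u (n + 1) - uhat))
  rw [inner_neg_right, norm_neg] at hE
  have hσX : 0 ≤ (θ - ω) * σ * ‖x (n + 1) - xhat‖ ^ 2 := by
    have := sub_nonneg.2 hωθ
    positivity
  unfold lyapunov
  nlinarith [mul_le_mul_of_nonneg_left hE hω]

theorem linear_rate (hρ : 0 < ρ) (hμ : 0 ≤ μ) (hL : (μ * ‖L‖) ^ 2 ≤ 4 * ρ * χ) (hσ : 0 ≤ σ)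
    (hχ : 0 ≤ χ) (hχκ : χ ≤ κ) (hω : 0 ≤ ω) (hωθ : ω ≤ θ) (hθ : θ ≤ 1)
    (hσω : (1 + θ - ω) * σ ≤ ω * (μ * ρ + σ)) (hκω : (1 + θ - ω) * κ ≤ ω * (μ * χ + κ))
    (hxb₀ : xb 0 = x 0) (hxb : ∀ n, xb (n + 1) = x (n + 1) + θ • (p (n + 1) - x n))
    (hu : ∀ n, ‖u (n + 2) - u (n + 1)‖ ≤ ‖η (n + 2) - u (n + 1)‖)
    (hiter : ∀ n, (μ * ρ + σ) * ‖x (n + 1) - xhat‖ ^ 2 + (μ * χ + κ) * ‖u (n + 1) - uhat‖ ^ 2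
        + χ * ‖η (n + 1) - u n‖ ^ 2 + ρ * ‖p (n + 1) - x n‖ ^ 2
        + μ * ⟪L (p (n + 1) - x n), u (n + 1) - uhat⟫
      ≤ σ * ‖x n - xhat‖ ^ 2 + κ * ‖u n - uhat‖ ^ 2
        + μ * ⟪L (xb n - x n), u (n + 1) - uhat⟫) (k : ℕ) :
    (κ - ω * χ) * ‖u k - uhat‖ ^ 2 + σ * ‖x k - xhat‖ ^ 2
      ≤ ω ^ k * (κ * ‖u 0 - uhat‖ ^ 2 + σ * ‖x 0 - xhat‖ ^ 2) := by
  have hstep n := lyapunov_add_le hω hσω hκω n (hiter n)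
  have hdecay : ∀ n, lyapunov L ρ μ σ κ θ ω x p u xhat uhat n
      ≤ ω ^ (n + 1) * (κ * ‖u 0 - uhat‖ ^ 2 + σ * ‖x 0 - xhat‖ ^ 2) := by
    intro n
    induction n with
    | zero => rw [zero_add, pow_one]; linarith [lyapunov_zero_le hχ hχκ hω hωθ hxb₀ (hstep 0)]
    | succ n ih =>
      calc lyapunov L ρ μ σ κ θ ω x p u xhat uhat (n + 1)
          ≤ ω * lyapunov L ρ μ σ κ θ ω x p u xhat uhat n :=
            lyapunov_succ_le hρ hμ hL hσ hχ hχκ hω hωθ hθ n (hxb n) (hu n) (hstep (n + 1))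
        _ ≤ _ := by rw [pow_succ' ω (n + 1), mul_assoc]; exact mul_le_mul_of_nonneg_left ih hω
  cases k with
  | zero => nlinarith [mul_nonneg (mul_nonneg hω hχ) (sq_nonneg ‖u 0 - uhat‖)]
  | succ n => exact (le_lyapunov hρ hμ hL hσ hω hωθ n).trans (hdecay n)

end PrimalDual

theorem stmt_3_general {H G : Type*}
    [NormedAddCommGroup H] [InnerProductSpace ℝ H] [CompleteSpace H]
    [NormedAddCommGroup G] [InnerProductSpace ℝ G] [CompleteSpace G]
    (V : Submodule ℝ G) [CompleteSpace V]
    (L : H →L[ℝ] G) (hL0 : L ≠ 0) (hran : ∀ z, L z ∈ V)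
    (ρ χ β δ : ℝ) (hρ : 0 < ρ) (hχ : 0 < χ) (hβ : 0 < β) (hδ : 0 < δ)
    (A : H → Set H)
    (hA : ∀ x y u v, u ∈ A x → v ∈ A y → ρ * ‖x - y‖ ^ 2 ≤ ⟪x - y, u - v⟫)
    (B : G → Set G)
    (hB : ∀ x y u v, u ∈ B x → v ∈ B y → χ * ‖x - y‖ ^ 2 ≤ ⟪x - y, u - v⟫)
    (C : H → H) (hC : ∀ x y, β * ‖C x - C y‖ ^ 2 ≤ ⟪C x - C y, x - y⟫)
    (D : G → G) (hD : ∀ x y, δ * ‖D x - D y‖ ^ 2 ≤ ⟪D x - D y, x - y⟫)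
    (a : ℝ) (ha : a ∈ Set.Ioo (0 : ℝ) 1)
    (T : H → H)
    (hT : ∀ z y, T y = y → ‖T z - y‖ ^ 2 ≤ ‖z - y‖ ^ 2 - ((1 - a) / a) * ‖z - T z‖ ^ 2)
    (μ α : ℝ)
    (hμ : μ = 2 * Real.sqrt (ρ * χ) / ‖L‖)
    (hαdef : α = min (μ * ρ / (ρ + μ / (4 * β))) (μ * χ / (χ + μ / (4 * δ))))
    (θ τ γ ω : ℝ)
    (hθ : θ ∈ Set.Ioc (1 / (1 + α)) 1)
    (hτdef : τ = 2 * β * μ / (μ + 4 * β * ρ))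
    (hγdef : γ = 2 * μ * δ / (μ + 4 * δ * χ))
    (hωdef : ω = (1 + θ) / (2 + α))
    (x p xb : ℕ → H) (u η : ℕ → G)
    (hxb0 : xb 0 = x 0)
    (halg1 : ∀ k, γ⁻¹ • (u k - η (k + 1)) + L (xb k) - D (u k) ∈ B (η (k + 1)))
    (halg2 : ∀ k, u (k + 1) = (V.orthogonalProjection (η (k + 1)) : G))
    (halg3 : ∀ k, τ⁻¹ • (x k - p (k + 1))
        - (ContinuousLinearMap.adjoint L) (u (k + 1)) - C (x k) ∈ A (p (k + 1)))
    (halg4 : ∀ k, x (k + 1) = T (p (k + 1)))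
    (halg5 : ∀ k, xb (k + 1) = x (k + 1) + θ • (p (k + 1) - x k)) :
    ω ∈ Set.Ico (1 / (1 + α)) θ ∧
      ∀ (xhat : H) (uhat : G), T xhat = xhat → uhat ∈ V →
        -(ContinuousLinearMap.adjoint L) uhat - C xhat ∈ A xhat →
        L xhat - D uhat ∈ B uhat →
        ∀ k : ℕ,
          (χ * (1 - ω) + μ / (4 * δ)) * ‖u k - uhat‖ ^ 2
              + (ρ + μ / (4 * β)) * ‖x k - xhat‖ ^ 2 ≤
            ω ^ k * ((χ + μ / (4 * δ)) * ‖u 0 - uhat‖ ^ 2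
              + (ρ + μ / (4 * β)) * ‖x 0 - xhat‖ ^ 2) := by
  obtain ⟨hθα, hθ1⟩ := hθ
  have hμpos : 0 < μ := by rw [hμ]; have := norm_pos_iff.2 hL0; positivity
  have hμL : (μ * ‖L‖) ^ 2 = 4 * ρ * χ := by
    rw [hμ, div_mul_cancel₀ _ (norm_ne_zero_iff.2 hL0), mul_pow, Real.sq_sqrt (by positivity)]
    ring
  set σ := ρ + μ / (4 * β) with hσ
  set κ := χ + μ / (4 * δ) with hκ
  have hα : 0 < α := by rw [hαdef]; exact lt_min (by positivity) (by positivity)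
  have hασ : α * σ ≤ μ * ρ := (le_div_iff₀ (by positivity)).1 (hαdef ▸ min_le_left _ _)
  have hακ : α * κ ≤ μ * χ := (le_div_iff₀ (by positivity)).1 (hαdef ▸ min_le_right _ _)
  have hωmem : ω ∈ Set.Ico (1 / (1 + α)) θ := hωdef ▸ div_two_add_mem_Ico hα hθα
  have hω : 0 ≤ ω := le_trans (by positivity) hωmem.1
  have hω2α : ω * (2 + α) = 1 + θ := by rw [hωdef]; field_simp
  have hu n : u (n + 1) = V.starProjection (η (n + 1)) :=
    (halg2 n).trans (V.starProjection_apply _).symm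
  refine ⟨hωmem, fun xhat uhat hTx huV hsA hsB k => ?_⟩
  have hiter n := PrimalDual.iterate_descent L hA hB hC hD hρ.le hχ.le hβ hδ hμpos.le hσ hκ
    (by rw [hτdef, hσ]; field_simp; ring) (by rw [hγdef, hκ]; field_simp; ring) V hran
    (halg1 n) (hu n) (halg3 n)
    (halg4 n ▸ norm_apply_sub_le_of_averaged ha.1.le ha.2.le hT hTx _) huV hsA hsB
  have hrate := PrimalDual.linear_rate hρ hμpos.le hμL.le (by positivity) hχ.le
    (le_add_of_nonneg_right (by positivity)) hω hωmem.2.le hθ1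
    (by linear_combination ω * hασ - σ * hω2α) (by linear_combination ω * hακ - κ * hω2α)
    hxb0 halg5
    (fun n => hu (n + 1) ▸ norm_starProjection_sub_le V _ (hu n ▸ V.starProjection_apply_mem _))
    hiter k
  rwa [show χ * (1 - ω) + μ / (4 * δ) = κ - ω * χ by ring]

/-- Theorem 3.2(iv): linear convergence of the projected primal-dual algorithm
when both A and B are strongly monotone (ρ > 0, χ > 0). -/
theorem stmt_3 {H G : Type*}
    [NormedAddCommGroup H] [InnerProductSpace ℝ H] [CompleteSpace H]
    [NormedAddCommGroup G] [InnerProductSpace ℝ G] [CompleteSpace G]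
    (V : Submodule ℝ G) [CompleteSpace V]
    (L : H →L[ℝ] G) (hL0 : L ≠ 0) (hran : ∀ z, L z ∈ V)
    (ρ χ β δ : ℝ) (hρ : 0 < ρ) (hχ : 0 < χ) (hβ : 0 < β) (hδ : 0 < δ)
    (A : H → Set H)
    (hA : ∀ x y u v, u ∈ A x → v ∈ A y → ρ * ‖x - y‖ ^ 2 ≤ ⟪x - y, u - v⟫)
    (B : G → Set G)
    (hB : ∀ x y u v, u ∈ B x → v ∈ B y → χ * ‖x - y‖ ^ 2 ≤ ⟪x - y, u - v⟫)
    (C : H → H) (hC : ∀ x y, β * ‖C x - C y‖ ^ 2 ≤ ⟪C x - C y, x - y⟫)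
    (D : G → G) (hD : ∀ x y, δ * ‖D x - D y‖ ^ 2 ≤ ⟪D x - D y, x - y⟫)
    (a : ℝ) (ha : a ∈ Set.Ioo (0 : ℝ) 1)
    (T : H → H) (hTfix : ∃ z, T z = z)
    (hT : ∀ z y, T y = y → ‖T z - y‖ ^ 2 ≤ ‖z - y‖ ^ 2 - ((1 - a) / a) * ‖z - T z‖ ^ 2)
    (μ α : ℝ)
    (hμ : μ = 2 * Real.sqrt (ρ * χ) / ‖L‖)
    (hαdef : α = min (μ * ρ / (ρ + μ / (4 * β))) (μ * χ / (χ + μ / (4 * δ))))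
    (θ τ γ ω : ℝ)
    (hθ : θ ∈ Set.Ioc (1 / (1 + α)) 1)
    (hτdef : τ = 2 * β * μ / (μ + 4 * β * ρ))
    (hγdef : γ = 2 * μ * δ / (μ + 4 * δ * χ))
    (hωdef : ω = (1 + θ) / (2 + α))
    (x p xb : ℕ → H) (u η : ℕ → G)
    (hxb0 : xb 0 = x 0) (hp0 : p 0 = x 0)
    (halg1 : ∀ k, γ⁻¹ • (u k - η (k + 1)) + L (xb k) - D (u k) ∈ B (η (k + 1)))
    (halg2 : ∀ k, u (k + 1) = (V.orthogonalProjection (η (k + 1)) : G))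
    (halg3 : ∀ k, τ⁻¹ • (x k - p (k + 1))
        - (ContinuousLinearMap.adjoint L) (u (k + 1)) - C (x k) ∈ A (p (k + 1)))
    (halg4 : ∀ k, x (k + 1) = T (p (k + 1)))
    (halg5 : ∀ k, xb (k + 1) = x (k + 1) + θ • (p (k + 1) - x k)) :
    ω ∈ Set.Ico (1 / (1 + α)) θ ∧
      ∀ (xhat : H) (uhat : G), T xhat = xhat → uhat ∈ V →
        -(ContinuousLinearMap.adjoint L) uhat - C xhat ∈ A xhat →
        L xhat - D uhat ∈ B uhat →
        ∀ k : ℕ,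
          (χ * (1 - ω) + μ / (4 * δ)) * ‖u k - uhat‖ ^ 2
              + (ρ + μ / (4 * β)) * ‖x k - xhat‖ ^ 2 ≤
            ω ^ k * ((χ + μ / (4 * δ)) * ‖u 0 - uhat‖ ^ 2
              + (ρ + μ / (4 * β)) * ‖x 0 - xhat‖ ^ 2) :=
  stmt_3_general V L hL0 hran ρ χ β δ hρ hχ hβ hδ A hA B hB C hC D hD a ha T hT μ α hμ hαdef θ τ γ ω
    hθ hτdef hγdef hωdef x p xb u η hxb0 halg1 halg2 halg3 halg4 halg5
end

section
/- Let f : ℝ^N → ℝ be convex, let R be an m×N real matrix with R Rᵀ invertible, S an n×N real matrix, c ∈ ℝ^m, d ∈ ℝ^n; let L : ℝ^N → ℝ^{m+n} be x ↦ (Rx, Sx) and b = (c,d). Let γ > 0 and τ > 0 satisfy γτ‖L‖² < 1. Assume there exists a pair (x̂₀, û₀) with R x̂₀ = c, S x̂₀ = d such that x̂₀ minimizes z ↦ f(z) + ⟨û₀, Lz⟩ over ℝ^N. Given x⁰ = x̄⁰ ∈ ℝ^N and u⁰ ∈ ℝ^{m+n}, define for every k ∈ ℕ: u^{k+1} = u^k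 + γ(L x̄^k − b); p^{k+1} = the unique minimizer over z ∈ ℝ^N of f(z) + ‖z − (x^k − τ L* u^{k+1})‖²/(2τ); x^{k+1} = p^{k+1} − Rᵀ(R Rᵀ)^{-1}(R p^{k+1} − c); x̄^{k+1} = x^{k+1} + p^{k+1} − x^k. Then there exist x̂ ∈ ℝ^N minimizing f over {x : Rx = c, Sx = d} and an associated multiplier û ∈ ℝ^{m+n} (i.e., x̂ minimizes z ↦ f(z) + ⟨û, Lz − b⟩ over ℝ^N) such that x^k → x̂ and u^k → û. -/
/-!
Every saddle point `(x̂, û)` of the Lagrangian is a Fejér point of the iteration for the energy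
`γ‖xᵏ - x̂‖² + τ‖uᵏ - û‖² + 2τγ⟪uᵏ - û, L(x̄ᵏ - xᵏ)⟫ + γ‖x̄ᵏ - xᵏ‖²`. Since `ρ = √(γτ)‖L‖ < 1`,
this energy dominates `γ‖xᵏ - x̂‖² + (1 - ρ)(τ‖uᵏ - û‖² + γ‖x̄ᵏ - xᵏ‖²)`, and each step decreases it
by at least `(1 - ρ)(γ‖x̄ᵏ - xᵏ‖² + τ‖uᵏ⁺¹ - uᵏ‖²)`: the proximal step contributes through its
variational inequality, and the projection onto `{x | R x = c}` cannot increase the distance to the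
feasible point `x̂`. Hence the iterates are bounded and `x̄ᵏ - xᵏ → 0`, `uᵏ⁺¹ - uᵏ → 0`. Passing to
the limit in the variational inequality shows that every cluster point is again a saddle point, and
the energy relative to that cluster point decreases to `0`, which forces convergence of the whole
sequence.
-/

open RealInnerProductSpace Filter Topology
open scoped InnerProduct

section Sequences

variable {G : Type*} [SeminormedAddCommGroup G]

lemma tendsto_of_forall_mul_sq_norm_sub_le {v : ℕ → G} {a : G} {c : ℝ} (hc : 0 < c)
    {g : ℕ → ℝ} (hg : Tendsto g atTop (𝓝 0)) (hle : ∀ k, c * ‖v k - a‖ ^ 2 ≤ g k) :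
    Tendsto v atTop (𝓝 a) := by
  rw [tendsto_iff_norm_sub_tendsto_zero]
  have hlim : Tendsto (fun k => √(g k / c)) atTop (𝓝 0) := by
    simpa using (hg.div_const c).sqrt
  refine squeeze_zero (fun _ => norm_nonneg _) (fun k => Real.le_sqrt_of_sq_le ?_) hlim
  rw [le_div_iff₀' hc]
  exact hle k

lemma isBounded_range_of_forall_mul_sq_norm_sub_le {v : ℕ → G} {a : G} {c M : ℝ} (hc : 0 < c)
    (hle : ∀ k, c * ‖v k - a‖ ^ 2 ≤ M) : Bornology.IsBounded (Set.range v) := by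
  rw [Metric.isBounded_iff_subset_closedBall a]
  refine ⟨M / c + 1, ?_⟩
  rintro _ ⟨k, rfl⟩
  have hsq : ‖v k - a‖ ^ 2 ≤ M / c := by rw [le_div_iff₀' hc]; exact hle k
  rw [Metric.mem_closedBall, dist_eq_norm]
  nlinarith [sq_nonneg (‖v k - a‖ - 1)]

lemma tendsto_zero_of_forall_add_le {Φ g : ℕ → ℝ} (hΦ : ∀ k, 0 ≤ Φ k) (hg : ∀ k, 0 ≤ g k)
    (hstep : ∀ k, Φ (k + 1) + g k ≤ Φ k) : Tendsto g atTop (𝓝 0) := by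
  have hanti : Antitone Φ := antitone_nat_of_succ_le fun k => by linarith [hstep k, hg k]
  have hlim : Tendsto Φ atTop (𝓝 (⨅ k, Φ k)) :=
    tendsto_atTop_ciInf hanti ⟨0, by rintro _ ⟨k, rfl⟩; exact hΦ k⟩
  have hdiff : Tendsto (fun k => Φ k - Φ (k + 1)) atTop (𝓝 0) := by
    simpa using hlim.sub (hlim.comp (tendsto_add_atTop_nat 1))
  exact squeeze_zero hg (fun k => by linarith [hstep k]) hdiff

end Sequences

section InnerProduct

variable {E F : Type*} [NormedAddCommGroup E] [InnerProductSpace ℝ E]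
  [NormedAddCommGroup F] [InnerProductSpace ℝ F]

/-- The variational inequality characterizing `q = prox_{τf} w`. -/
theorem ConvexOn.inner_sub_le_of_forall_le_add_sq {f : E → ℝ} (hf : ConvexOn ℝ Set.univ f)
    {τ : ℝ} (hτ : 0 < τ) {w q : E}
    (hq : ∀ z, f q + ‖q - w‖ ^ 2 / (2 * τ) ≤ f z + ‖z - w‖ ^ 2 / (2 * τ)) (z : E) :
    ⟪w - q, z - q⟫ ≤ τ * (f z - f q) := by
  have hq' : ∀ z, 2 * τ * f q + ‖q - w‖ ^ 2 ≤ 2 * τ * f z + ‖z - w‖ ^ 2 := fun z => by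
    have := hq z
    field_simp at this
    linarith
  -- compare `q` with the points `q + t • (z - q)` of the segment and let `t → 0⁺`
  have hsegment : ∀ t ∈ Set.Ioo (0 : ℝ) 1,
      ⟪w - q, z - q⟫ - τ * (f z - f q) ≤ t * (‖z - q‖ ^ 2 / 2) := by
    rintro t ⟨ht0, ht1⟩
    have hconv : f (q + t • (z - q)) ≤ f q + t * (f z - f q) := by
      have h := hf.2 (Set.mem_univ q) (Set.mem_univ z) (sub_nonneg.2 ht1.le) ht0.le (by ring)
      rw [show (1 - t) • q + t • z = q + t • (z - q) by module, smul_eq_mul, smul_eq_mul] at h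
      linarith
    have hnorm : ‖q + t • (z - q) - w‖ ^ 2
        = ‖q - w‖ ^ 2 - 2 * t * ⟪w - q, z - q⟫ + t ^ 2 * ‖z - q‖ ^ 2 := by
      rw [show q + t • (z - q) - w = (q - w) + t • (z - q) by abel, norm_add_sq_real,
        real_inner_smul_right, norm_smul, mul_pow, Real.norm_eq_abs, sq_abs,
        ← neg_sub w q, inner_neg_left]
      ring
    have hmin := hq' (q + t • (z - q))
    rw [hnorm] at hmin
    have h2τ := mul_le_mul_of_nonneg_left hconv (by positivity : (0 : ℝ) ≤ 2 * τ)
    refine (mul_le_mul_iff_right₀ (by positivity : (0 : ℝ) < 2 * t)).1 ?_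
    linarith
  have hlim : Tendsto (fun t : ℝ => t * (‖z - q‖ ^ 2 / 2)) (𝓝[>] 0) (𝓝 0) := by
    have := (continuous_mul_const (‖z - q‖ ^ 2 / 2)).tendsto 0
    rw [zero_mul] at this
    exact tendsto_nhdsWithin_of_tendsto_nhds this
  have := ge_of_tendsto hlim (eventually_of_mem (Ioo_mem_nhdsGT one_pos) hsegment)
  linarith

lemma norm_sub_le_norm_sub_of_inner_le_zero {p x y : E} (h : ⟪p - x, y - x⟫ ≤ 0) :
    ‖x - y‖ ≤ ‖p - y‖ := by
  have hexp : ‖p - y‖ ^ 2 = ‖p - x‖ ^ 2 - 2 * ⟪p - x, y - x⟫ + ‖x - y‖ ^ 2 := by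
    rw [show p - y = (p - x) - (y - x) by abel, norm_sub_sq_real, ← norm_neg (y - x), neg_sub]
  exact pow_le_pow_iff_left₀ (norm_nonneg _) (norm_nonneg _) two_ne_zero |>.1 <| by
    nlinarith [sq_nonneg ‖p - x‖]

lemma two_mul_mul_inner_le (L : E →L[ℝ] F) {γ τ : ℝ} (hγ : 0 ≤ γ) (hτ : 0 ≤ τ) (v : F) (w : E) :
    2 * τ * γ * ⟪v, L w⟫ ≤ √(γ * τ) * ‖L‖ * (τ * ‖v‖ ^ 2 + γ * ‖w‖ ^ 2) := by
  have hCS : ⟪v, L w⟫ ≤ ‖L‖ * (‖v‖ * ‖w‖) := by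
    calc ⟪v, L w⟫ ≤ ‖v‖ * ‖L w‖ := real_inner_le_norm v (L w)
      _ ≤ ‖v‖ * (‖L‖ * ‖w‖) := by gcongr; exact L.le_opNorm w
      _ = ‖L‖ * (‖v‖ * ‖w‖) := by ring
  -- AM-GM with `√τ ‖v‖` and `√γ ‖w‖`
  have hAMGM : 2 * τ * γ * (‖v‖ * ‖w‖) ≤ √(γ * τ) * (τ * ‖v‖ ^ 2 + γ * ‖w‖ ^ 2) := by
    obtain ⟨g, hg, rfl⟩ : ∃ g, 0 ≤ g ∧ γ = g ^ 2 := ⟨√γ, Real.sqrt_nonneg γ, (Real.sq_sqrt hγ).symm⟩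
    obtain ⟨a, ha, rfl⟩ : ∃ a, 0 ≤ a ∧ τ = a ^ 2 := ⟨√τ, Real.sqrt_nonneg τ, (Real.sq_sqrt hτ).symm⟩
    rw [← mul_pow, Real.sqrt_sq (mul_nonneg hg ha)]
    nlinarith [mul_nonneg (mul_nonneg hg ha) (sq_nonneg (a * ‖v‖ - g * ‖w‖))]
  calc 2 * τ * γ * ⟪v, L w⟫ ≤ 2 * τ * γ * (‖L‖ * (‖v‖ * ‖w‖)) := by gcongr
    _ = ‖L‖ * (2 * τ * γ * (‖v‖ * ‖w‖)) := by ring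
    _ ≤ ‖L‖ * (√(γ * τ) * (τ * ‖v‖ ^ 2 + γ * ‖w‖ ^ 2)) := by gcongr
    _ = _ := by ring

def IsSaddlePoint (f : E → ℝ) (L : E →L[ℝ] F) (b : F) (x : E) (u : F) : Prop :=
  L x = b ∧ ∀ z, f x + ⟪u, L x⟫ ≤ f z + ⟪u, L z⟫

/-- The Lyapunov function, to be evaluated at `x = xᵏ - x̂`, `u = uᵏ - û`, `q = x̄ᵏ - xᵏ`. -/
def cpEnergy (L : E →L[ℝ] F) (γ τ : ℝ) (x : E) (u : F) (q : E) : ℝ :=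
  γ * ‖x‖ ^ 2 + τ * ‖u‖ ^ 2 + 2 * τ * γ * ⟪u, L q⟫ + γ * ‖q‖ ^ 2

lemma le_cpEnergy (L : E →L[ℝ] F) {γ τ : ℝ} (hγ : 0 ≤ γ) (hτ : 0 ≤ τ) (x : E) (u : F) (q : E) :
    γ * ‖x‖ ^ 2 + (1 - √(γ * τ) * ‖L‖) * (τ * ‖u‖ ^ 2 + γ * ‖q‖ ^ 2) ≤ cpEnergy L γ τ x u q := by
  have h := two_mul_mul_inner_le L hγ hτ (-u) q
  rw [inner_neg_left, norm_neg] at h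
  unfold cpEnergy
  linarith

lemma mul_sq_norm_le_cpEnergy (L : E →L[ℝ] F) {γ τ : ℝ} (hγ : 0 ≤ γ) (hτ : 0 ≤ τ)
    (hρ : √(γ * τ) * ‖L‖ ≤ 1) (x : E) (u : F) (q : E) : γ * ‖x‖ ^ 2 ≤ cpEnergy L γ τ x u q := by
  have := sub_nonneg.2 hρ
  have : 0 ≤ (1 - √(γ * τ) * ‖L‖) * (τ * ‖u‖ ^ 2 + γ * ‖q‖ ^ 2) := by positivity
  linarith [le_cpEnergy L hγ hτ x u q]

lemma mul_sq_norm_dual_le_cpEnergy (L : E →L[ℝ] F) {γ τ : ℝ} (hγ : 0 ≤ γ) (hτ : 0 ≤ τ)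
    (hρ : √(γ * τ) * ‖L‖ ≤ 1) (x : E) (u : F) (q : E) :
    (1 - √(γ * τ) * ‖L‖) * τ * ‖u‖ ^ 2 ≤ cpEnergy L γ τ x u q := by
  have := sub_nonneg.2 hρ
  have : 0 ≤ γ * ‖x‖ ^ 2 + (1 - √(γ * τ) * ‖L‖) * (γ * ‖q‖ ^ 2) := by positivity
  linarith [le_cpEnergy L hγ hτ x u q]

lemma cpEnergy_nonneg (L : E →L[ℝ] F) {γ τ : ℝ} (hγ : 0 ≤ γ) (hτ : 0 ≤ τ)
    (hρ : √(γ * τ) * ‖L‖ ≤ 1) (x : E) (u : F) (q : E) : 0 ≤ cpEnergy L γ τ x u q :=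
  (by positivity : 0 ≤ γ * ‖x‖ ^ 2).trans (mul_sq_norm_le_cpEnergy L hγ hτ hρ x u q)

/-- One step of the iteration in error coordinates: `a`, `a'` are the old and new primal errors,
`π` the error of the proximal point, `v`, `v'` the old and new dual errors. -/
lemma cpEnergy_step_le (L : E →L[ℝ] F) {γ τ : ℝ} (hγ : 0 ≤ γ) (hτ : 0 ≤ τ) {a a' π q : E}
    {v v' : F} (hπ : ⟪π - a, π⟫ + τ * ⟪v', L π⟫ ≤ 0) (hv : v' - v = γ • L (a + q))
    (ha' : ‖a'‖ ≤ ‖π‖) :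
    cpEnergy L γ τ a' v' (π - a) + (1 - √(γ * τ) * ‖L‖) * (γ * ‖q‖ ^ 2 + τ * ‖v' - v‖ ^ 2)
      ≤ cpEnergy L γ τ a v q := by
  have hCS := two_mul_mul_inner_le L hγ hτ (v' - v) q
  have hsq : ‖a'‖ ^ 2 ≤ ‖π‖ ^ 2 := pow_le_pow_left₀ (norm_nonneg _) ha' 2
  have ha : ‖a‖ ^ 2 = ‖π - a‖ ^ 2 - 2 * ⟪π - a, π⟫ + ‖π‖ ^ 2 := by
    rw [show a = π - (π - a) by abel, norm_sub_sq_real, real_inner_comm]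
    simp only [sub_sub_cancel]
    ring
  have hv2 : ‖v‖ ^ 2 = ‖v'‖ ^ 2 - 2 * ⟪v' - v, v'⟫ + ‖v' - v‖ ^ 2 := by
    rw [show v = v' - (v' - v) by abel, norm_sub_sq_real, real_inner_comm]
    simp only [sub_sub_cancel]
  have hvv' : ⟪v' - v, v'⟫ = γ * (⟪v', L π⟫ - ⟪v', L (π - a)⟫ + ⟪v', L q⟫) := by
    rw [hv, real_inner_smul_left, real_inner_comm, show a + q = π - (π - a) + q by abel,
      map_add, map_sub, inner_add_right, inner_sub_right]
  have hvq : ⟪v, L q⟫ = ⟪v', L q⟫ - ⟪v' - v, L q⟫ := by rw [inner_sub_left]; ring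
  unfold cpEnergy
  rw [ha, hv2, hvv', hvq]
  linarith [mul_le_mul_of_nonneg_left hπ (by positivity : (0 : ℝ) ≤ 2 * γ),
    mul_le_mul_of_nonneg_left hsq hγ]

variable [CompleteSpace E] [CompleteSpace F]

/-- The projection step is only required to satisfy the obtuse-angle inequality of a projection onto
a convex set containing `{y | L y = b}`. -/
structure IsProjectedChambollePock (f : E → ℝ) (L : E →L[ℝ] F) (b : F) (γ τ : ℝ)
    (x p xb : ℕ → E) (u : ℕ → F) : Prop where
  xb_zero : xb 0 = x 0
  u_succ : ∀ k, u (k + 1) = u k + γ • (L (xb k) - b)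
  p_succ_le : ∀ k z,
    f (p (k + 1)) + ‖p (k + 1) - (x k - τ • (L†) (u (k + 1)))‖ ^ 2 / (2 * τ)
      ≤ f z + ‖z - (x k - τ • (L†) (u (k + 1)))‖ ^ 2 / (2 * τ)
  x_succ_inner_le : ∀ k y, L y = b → ⟪p (k + 1) - x (k + 1), y - x (k + 1)⟫ ≤ 0
  xb_succ : ∀ k, xb (k + 1) = x (k + 1) + p (k + 1) - x k

namespace IsProjectedChambollePock

variable {f : E → ℝ} {L : E →L[ℝ] F} {b : F} {γ τ : ℝ} {x p xb : ℕ → E} {u : ℕ → F}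

lemma p_succ_sub (h : IsProjectedChambollePock f L b γ τ x p xb u) (k : ℕ) :
    p (k + 1) - x k = xb (k + 1) - x (k + 1) := by
  rw [h.xb_succ]; abel

lemma inner_sub_le (h : IsProjectedChambollePock f L b γ τ x p xb u)
    (hf : ConvexOn ℝ Set.univ f) (hτ : 0 < τ) (k : ℕ) (z : E) :
    ⟪x k - p (k + 1), z - p (k + 1)⟫
      ≤ τ * (f z - f (p (k + 1)) + ⟪u (k + 1), L (z - p (k + 1))⟫) := by
  have hvi := hf.inner_sub_le_of_forall_le_add_sq hτ (h.p_succ_le k) z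
  rw [sub_right_comm, inner_sub_left, real_inner_smul_left,
    ContinuousLinearMap.adjoint_inner_left] at hvi
  linarith

lemma energy_succ_add_le (h : IsProjectedChambollePock f L b γ τ x p xb u)
    (hf : ConvexOn ℝ Set.univ f) (hγ : 0 < γ) (hτ : 0 < τ) {xh : E} {uh : F}
    (hs : IsSaddlePoint f L b xh uh) (k : ℕ) :
    cpEnergy L γ τ (x (k + 1) - xh) (u (k + 1) - uh) (xb (k + 1) - x (k + 1))
        + (1 - √(γ * τ) * ‖L‖) * (γ * ‖xb k - x k‖ ^ 2 + τ * ‖u (k + 1) - u k‖ ^ 2)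
      ≤ cpEnergy L γ τ (x k - xh) (u k - uh) (xb k - x k) := by
  obtain ⟨hLxh, hsad⟩ := hs
  have hπ : ⟪(p (k + 1) - xh) - (x k - xh), p (k + 1) - xh⟫
      + τ * ⟪u (k + 1) - uh, L (p (k + 1) - xh)⟫ ≤ 0 := by
    have hsP : f xh - f (p (k + 1)) ≤ ⟪uh, L (p (k + 1) - xh)⟫ := by
      have := hsad (p (k + 1))
      rw [map_sub, inner_sub_right]
      linarith
    have hvi := h.inner_sub_le hf hτ k xh
    rw [← neg_sub (p (k + 1)) xh, inner_neg_right, map_neg, inner_neg_right,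
      ← neg_sub (p (k + 1)) (x k), inner_neg_left, neg_neg] at hvi
    rw [sub_sub_sub_cancel_right, inner_sub_left (u (k + 1)) uh]
    linarith [mul_le_mul_of_nonneg_left hsP hτ.le]
  have hv : (u (k + 1) - uh) - (u k - uh) = γ • L ((x k - xh) + (xb k - x k)) := by
    rw [sub_sub_sub_cancel_right, h.u_succ, ← hLxh, ← map_sub]
    simp only [add_sub_cancel_left, sub_add_sub_cancel']
  have ha' : ‖x (k + 1) - xh‖ ≤ ‖p (k + 1) - xh‖ :=
    norm_sub_le_norm_sub_of_inner_le_zero (h.x_succ_inner_le k xh hLxh)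
  have := cpEnergy_step_le L hγ.le hτ.le hπ hv ha'
  rwa [sub_sub_sub_cancel_right, sub_sub_sub_cancel_right, h.p_succ_sub] at this

lemma energy_antitone (h : IsProjectedChambollePock f L b γ τ x p xb u)
    (hf : ConvexOn ℝ Set.univ f) (hγ : 0 < γ) (hτ : 0 < τ) (hρ : √(γ * τ) * ‖L‖ ≤ 1)
    {xh : E} {uh : F} (hs : IsSaddlePoint f L b xh uh) :
    Antitone fun k => cpEnergy L γ τ (x k - xh) (u k - uh) (xb k - x k) :=
  antitone_nat_of_succ_le fun k => by
    have hstep := h.energy_succ_add_le hf hγ hτ hs k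
    have : 0 ≤ (1 - √(γ * τ) * ‖L‖) * (γ * ‖xb k - x k‖ ^ 2 + τ * ‖u (k + 1) - u k‖ ^ 2) := by
      have := sub_nonneg.2 hρ
      positivity
    linarith

lemma tendsto_residuals (h : IsProjectedChambollePock f L b γ τ x p xb u)
    (hf : ConvexOn ℝ Set.univ f) (hγ : 0 < γ) (hτ : 0 < τ) (hρ : √(γ * τ) * ‖L‖ < 1)
    {xh : E} {uh : F} (hs : IsSaddlePoint f L b xh uh) :
    Tendsto (fun k => xb k - x k) atTop (𝓝 0) ∧
      Tendsto (fun k => u (k + 1) - u k) atTop (𝓝 0) := by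
  have hρ' : 0 < 1 - √(γ * τ) * ‖L‖ := sub_pos.2 hρ
  have hg := tendsto_zero_of_forall_add_le
    (fun k => cpEnergy_nonneg L hγ.le hτ.le hρ.le (x k - xh) (u k - uh) (xb k - x k))
    (fun k => by positivity) (h.energy_succ_add_le hf hγ hτ hs)
  constructor
  · refine tendsto_of_forall_mul_sq_norm_sub_le (mul_pos hρ' hγ) hg fun k => ?_
    rw [sub_zero, mul_assoc]
    exact mul_le_mul_of_nonneg_left (le_add_of_nonneg_right (by positivity)) hρ'.le
  · refine tendsto_of_forall_mul_sq_norm_sub_le (mul_pos hρ' hτ) hg fun k => ?_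
    rw [sub_zero, mul_assoc]
    exact mul_le_mul_of_nonneg_left (le_add_of_nonneg_left (by positivity)) hρ'.le

lemma isBounded_range (h : IsProjectedChambollePock f L b γ τ x p xb u)
    (hf : ConvexOn ℝ Set.univ f) (hγ : 0 < γ) (hτ : 0 < τ) (hρ : √(γ * τ) * ‖L‖ < 1)
    {xh : E} {uh : F} (hs : IsSaddlePoint f L b xh uh) :
    Bornology.IsBounded (Set.range fun k => (x k, u k)) := by
  have hρ' : 0 < 1 - √(γ * τ) * ‖L‖ := sub_pos.2 hρ
  have hE := h.energy_antitone hf hγ hτ hρ.le hs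
  have hx := isBounded_range_of_forall_mul_sq_norm_sub_le hγ fun k =>
    (mul_sq_norm_le_cpEnergy L hγ.le hτ.le hρ.le _ _ _).trans (hE (Nat.zero_le k))
  have hu := isBounded_range_of_forall_mul_sq_norm_sub_le (mul_pos hρ' hτ) fun k =>
    (mul_sq_norm_dual_le_cpEnergy L hγ.le hτ.le hρ.le _ _ _).trans (hE (Nat.zero_le k))
  refine (hx.prod hu).subset ?_
  rintro _ ⟨k, rfl⟩
  exact ⟨⟨k, rfl⟩, ⟨k, rfl⟩⟩

lemma isSaddlePoint_of_tendsto_subseq (h : IsProjectedChambollePock f L b γ τ x p xb u)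
    (hf : ConvexOn ℝ Set.univ f) (hfc : Continuous f) (hγ : γ ≠ 0) (hτ : 0 < τ)
    (hq : Tendsto (fun k => xb k - x k) atTop (𝓝 0))
    (hdu : Tendsto (fun k => u (k + 1) - u k) atTop (𝓝 0))
    {φ : ℕ → ℕ} (hφ : Tendsto φ atTop atTop) {xs : E} {us : F}
    (hx : Tendsto (x ∘ φ) atTop (𝓝 xs)) (hu : Tendsto (u ∘ φ) atTop (𝓝 us)) :
    IsSaddlePoint f L b xs us := by
  have hφ1 : Tendsto (fun j => φ j + 1) atTop atTop := (tendsto_add_atTop_nat 1).comp hφ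
  have hxb : Tendsto (fun j => xb (φ j)) atTop (𝓝 xs) := by
    simpa using hx.add (hq.comp hφ)
  have hp : Tendsto (fun j => p (φ j + 1)) atTop (𝓝 xs) := by
    have := hx.add (hq.comp hφ1)
    simp only [add_zero] at this
    refine this.congr fun j => ?_
    simp [← h.p_succ_sub]
  have hu1 : Tendsto (fun j => u (φ j + 1)) atTop (𝓝 us) := by
    simpa using hu.add (hdu.comp hφ)
  refine ⟨?_, fun z => ?_⟩
  · have hres : Tendsto (fun j => L (xb (φ j)) - b) atTop (𝓝 0) := by
      have := (hdu.comp hφ).const_smul γ⁻¹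
      rw [smul_zero] at this
      refine this.congr fun j => ?_
      simp [h.u_succ, smul_smul, inv_mul_cancel₀ hγ]
    exact sub_eq_zero.1 <| tendsto_nhds_unique
      (((L.continuous.tendsto xs).comp hxb).sub tendsto_const_nhds) hres
  · have hlhs : Tendsto (fun j => ⟪x (φ j) - p (φ j + 1), z - p (φ j + 1)⟫) atTop
        (𝓝 ⟪xs - xs, z - xs⟫) := (hx.sub hp).inner (tendsto_const_nhds.sub hp)
    have hrhs : Tendsto (fun j => τ * (f z - f (p (φ j + 1)) + ⟪u (φ j + 1), L (z - p (φ j + 1))⟫))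
        atTop (𝓝 (τ * (f z - f xs + ⟪us, L (z - xs)⟫))) :=
      ((tendsto_const_nhds.sub ((hfc.tendsto xs).comp hp)).add
        (hu1.inner ((L.continuous.tendsto _).comp (tendsto_const_nhds.sub hp)))).const_mul τ
    have hlim := le_of_tendsto_of_tendsto' hlhs hrhs fun j => h.inner_sub_le hf hτ (φ j) z
    rw [sub_self, inner_zero_left, map_sub, inner_sub_right] at hlim
    linarith [(mul_nonneg_iff_of_pos_left hτ).1 hlim]

lemma tendsto_of_tendsto_subseq (h : IsProjectedChambollePock f L b γ τ x p xb u)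
    (hf : ConvexOn ℝ Set.univ f) (hγ : 0 < γ) (hτ : 0 < τ) (hρ : √(γ * τ) * ‖L‖ < 1)
    {xs : E} {us : F} (hs : IsSaddlePoint f L b xs us)
    (hq : Tendsto (fun k => xb k - x k) atTop (𝓝 0)) {φ : ℕ → ℕ} (hφ : Tendsto φ atTop atTop)
    (hx : Tendsto (x ∘ φ) atTop (𝓝 xs)) (hu : Tendsto (u ∘ φ) atTop (𝓝 us)) :
    Tendsto x atTop (𝓝 xs) ∧ Tendsto u atTop (𝓝 us) := by
  have hρ' : 0 < 1 - √(γ * τ) * ‖L‖ := sub_pos.2 hρ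
  have hcont : Continuous fun t : E × F × E => cpEnergy L γ τ t.1 t.2.1 t.2.2 := by
    unfold cpEnergy; fun_prop
  have hΦφ : Tendsto (fun j => cpEnergy L γ τ (x (φ j) - xs) (u (φ j) - us) (xb (φ j) - x (φ j)))
      atTop (𝓝 0) := by
    have := (hcont.tendsto (0, 0, 0)).comp
      ((tendsto_sub_nhds_zero_iff.2 hx).prodMk_nhds
        ((tendsto_sub_nhds_zero_iff.2 hu).prodMk_nhds (hq.comp hφ)))
    rwa [show cpEnergy L γ τ 0 0 0 = 0 by simp [cpEnergy]] at this
  have hΦ := ((tendsto_iff_tendsto_subseq_of_antitone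
    (h.energy_antitone hf hγ hτ hρ.le hs) hφ).2 hΦφ)
  exact ⟨tendsto_of_forall_mul_sq_norm_sub_le hγ hΦ fun k =>
      mul_sq_norm_le_cpEnergy L hγ.le hτ.le hρ.le _ _ _,
    tendsto_of_forall_mul_sq_norm_sub_le (mul_pos hρ' hτ) hΦ fun k =>
      mul_sq_norm_dual_le_cpEnergy L hγ.le hτ.le hρ.le _ _ _⟩

theorem exists_tendsto [FiniteDimensional ℝ E] [FiniteDimensional ℝ F]
    (h : IsProjectedChambollePock f L b γ τ x p xb u) (hf : ConvexOn ℝ Set.univ f)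
    (hγ : 0 < γ) (hτ : 0 < τ) (hpar : γ * τ * ‖L‖ ^ 2 < 1)
    (hsol : ∃ x₀ u₀, IsSaddlePoint f L b x₀ u₀) :
    ∃ xs us, IsSaddlePoint f L b xs us ∧ Tendsto x atTop (𝓝 xs) ∧ Tendsto u atTop (𝓝 us) := by
  obtain ⟨x₀, u₀, hs₀⟩ := hsol
  have hρ : √(γ * τ) * ‖L‖ < 1 := by
    rw [← Real.sqrt_sq (norm_nonneg L), ← Real.sqrt_mul (by positivity)]
    exact (Real.sqrt_lt' one_pos).2 (by rwa [one_pow])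
  have hfc : Continuous f := continuousOn_univ.1 (hf.continuousOn isOpen_univ)
  obtain ⟨hq, hdu⟩ := h.tendsto_residuals hf hγ hτ hρ hs₀
  obtain ⟨⟨xs, us⟩, -, φ, hφ, hlim⟩ :=
    tendsto_subseq_of_bounded (h.isBounded_range hf hγ hτ hρ hs₀) fun k => ⟨k, rfl⟩
  have hx : Tendsto (x ∘ φ) atTop (𝓝 xs) := (continuous_fst.tendsto _).comp hlim
  have hu : Tendsto (u ∘ φ) atTop (𝓝 us) := (continuous_snd.tendsto _).comp hlim
  have hs := h.isSaddlePoint_of_tendsto_subseq hf hfc hγ.ne' hτ hq hdu hφ.tendsto_atTop hx hu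
  exact ⟨xs, us, hs, h.tendsto_of_tendsto_subseq hf hγ hτ hρ hs hq hφ.tendsto_atTop hx hu⟩

end IsProjectedChambollePock

end InnerProduct

lemma Fin.append_eq_append_iff {α : Type*} {m n : ℕ} {a a' : Fin m → α} {b b' : Fin n → α} :
    Fin.append a b = Fin.append a' b' ↔ a = a' ∧ b = b' := by
  refine ⟨fun h => ⟨funext fun i => ?_, funext fun i => ?_⟩, fun ⟨ha, hb⟩ => ha ▸ hb ▸ rfl⟩
  · simpa using congrFun h (Fin.castAdd n i)
  · simpa using congrFun h (Fin.natAdd m i)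

namespace Matrix

variable {m N : ℕ}

noncomputable def projSolutions (R : Matrix (Fin m) (Fin N) ℝ) (c : EuclideanSpace ℝ (Fin m))
    (p : EuclideanSpace ℝ (Fin N)) : EuclideanSpace ℝ (Fin N) :=
  p - WithLp.toLp 2 (Rᵀ *ᵥ ((R * Rᵀ)⁻¹ *ᵥ (R *ᵥ p - c)))

lemma mulVec_projSolutions {R : Matrix (Fin m) (Fin N) ℝ} (hR : IsUnit (R * Rᵀ))
    (c : EuclideanSpace ℝ (Fin m)) (p : EuclideanSpace ℝ (Fin N)) :
    R *ᵥ projSolutions R c p = c := by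
  rw [projSolutions, WithLp.ofLp_sub, WithLp.ofLp_toLp, mulVec_sub, mulVec_mulVec,
    mulVec_mulVec, mul_nonsing_inv _ ((isUnit_iff_isUnit_det _).1 hR), one_mulVec,
    sub_sub_cancel]

lemma inner_toLp_transpose_mulVec (R : Matrix (Fin m) (Fin N) ℝ) (w : Fin m → ℝ)
    (v : EuclideanSpace ℝ (Fin N)) : ⟪WithLp.toLp 2 (Rᵀ *ᵥ w), v⟫ = w ⬝ᵥ R *ᵥ v := by
  rw [EuclideanSpace.inner_eq_star_dotProduct, WithLp.ofLp_toLp, star_trivial, dotProduct_mulVec,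
    vecMul_transpose, dotProduct_comm]

lemma inner_sub_projSolutions {R : Matrix (Fin m) (Fin N) ℝ} (hR : IsUnit (R * Rᵀ))
    {c : EuclideanSpace ℝ (Fin m)} (p : EuclideanSpace ℝ (Fin N)) {y : EuclideanSpace ℝ (Fin N)}
    (hy : R *ᵥ y = c) : ⟪p - projSolutions R c p, y - projSolutions R c p⟫ = 0 := by
  rw [projSolutions, sub_sub_cancel, inner_toLp_transpose_mulVec, ← projSolutions,
    WithLp.ofLp_sub, mulVec_sub R, hy, mulVec_projSolutions hR, sub_self, dotProduct_zero]

end Matrix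

/-- Corollary 4.2: convergence of the projected Chambolle–Pock algorithm for
min f(x) s.t. Rx = c, Sx = d, with projection onto the selection Rx = c. -/
theorem stmt_4 (N m n : ℕ)
    (f : EuclideanSpace ℝ (Fin N) → ℝ) (hf : ConvexOn ℝ Set.univ f)
    (R : Matrix (Fin m) (Fin N) ℝ) (S : Matrix (Fin n) (Fin N) ℝ)
    (hR : IsUnit (R * R.transpose))
    (c : EuclideanSpace ℝ (Fin m)) (d : EuclideanSpace ℝ (Fin n))
    (L : EuclideanSpace ℝ (Fin N) →L[ℝ] EuclideanSpace ℝ (Fin (m + n)))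
    (hLdef : ∀ z, L z = Fin.append (R.mulVec z) (S.mulVec z))
    (b : EuclideanSpace ℝ (Fin (m + n))) (hb : b = Fin.append c d)
    (γ τ : ℝ) (hγ : 0 < γ) (hτ : 0 < τ) (hpar : γ * τ * ‖L‖ ^ 2 < 1)
    (hsol : ∃ (x0 : EuclideanSpace ℝ (Fin N)) (u0 : EuclideanSpace ℝ (Fin (m + n))),
      R.mulVec x0 = c ∧ S.mulVec x0 = d ∧
        ∀ z, f x0 + ⟪u0, L x0⟫ ≤ f z + ⟪u0, L z⟫)
    (x p xb : ℕ → EuclideanSpace ℝ (Fin N))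
    (u : ℕ → EuclideanSpace ℝ (Fin (m + n)))
    (hxb0 : xb 0 = x 0)
    (hu : ∀ k, u (k + 1) = u k + γ • (L (xb k) - b))
    (hp : ∀ k, ∀ z,
      f (p (k + 1)) + ‖p (k + 1)
          - (x k - τ • (ContinuousLinearMap.adjoint L) (u (k + 1)))‖ ^ 2 / (2 * τ)
        ≤ f z + ‖z - (x k - τ • (ContinuousLinearMap.adjoint L) (u (k + 1)))‖ ^ 2 / (2 * τ))
    (hx : ∀ k, x (k + 1) = p (k + 1)
      - ((WithLp.equiv 2 _).symm (R.transpose.mulVec ((R * R.transpose)⁻¹.mulVec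
          (R.mulVec (p (k + 1)) - (WithLp.equiv 2 _) c))) : EuclideanSpace ℝ (Fin N)))
    (hxb : ∀ k, xb (k + 1) = x (k + 1) + p (k + 1) - x k) :
    ∃ (xhat : EuclideanSpace ℝ (Fin N)) (uhat : EuclideanSpace ℝ (Fin (m + n))),
      R.mulVec xhat = c ∧ S.mulVec xhat = d ∧
      (∀ z, R.mulVec z = c → S.mulVec z = d → f xhat ≤ f (WithLp.toLp 2 z)) ∧
      (∀ z, f xhat + ⟪uhat, L xhat - b⟫ ≤ f z + ⟪uhat, L z - b⟫) ∧
      Tendsto x atTop (𝓝 xhat) ∧ Tendsto u atTop (𝓝 uhat) := by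
  have hLb : ∀ y, L y = b ↔ R.mulVec y = c ∧ S.mulVec y = d := fun y => by
    rw [← (WithLp.ofLp_injective 2).eq_iff, hLdef, hb, Fin.append_eq_append_iff]
  have hiter : IsProjectedChambollePock f L b γ τ x p xb u :=
    { xb_zero := hxb0
      u_succ := hu
      p_succ_le := hp
      x_succ_inner_le := fun k y hy => by
        rw [show x (k + 1) = R.projSolutions c (p (k + 1)) from hx k,
          Matrix.inner_sub_projSolutions hR _ ((hLb y).1 hy).1]
      xb_succ := hxb }
  obtain ⟨x₀, u₀, hRx₀, hSx₀, hsad₀⟩ := hsol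
  obtain ⟨xh, uh, ⟨hLxh, hsad⟩, hxlim, hulim⟩ :=
    hiter.exists_tendsto hf hγ hτ hpar ⟨x₀, u₀, (hLb x₀).2 ⟨hRx₀, hSx₀⟩, hsad₀⟩
  obtain ⟨hRxh, hSxh⟩ := (hLb xh).1 hLxh
  refine ⟨xh, uh, hRxh, hSxh, fun z hRz hSz => ?_, fun z => ?_, hxlim, hulim⟩
  · have hLz : L (WithLp.toLp 2 z) = L xh := hLxh ▸ (hLb _).2 ⟨hRz, hSz⟩
    simpa [hLz] using hsad (WithLp.toLp 2 z)
  · rw [inner_sub_right, inner_sub_right]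
    linarith [hsad z]
end

section
/- Let H and G be real Hilbert spaces, L : H → G a bounded linear operator with adjoint L*, τ > 0, γ > 0, ρ ≥ 0, χ ≥ 0, β > 0, δ > 0. Let A : H → Set H be ρ-strongly monotone, B : G → Set G be χ-strongly monotone, C : H → H be β-cocoercive, and D : G → G be δ-cocoercive. Suppose x, x̄, p, x̂ ∈ H and u, η, w, û ∈ G satisfy the inclusions (x − p)/τ − L*w − Cx ∈ A p, (u − η)/γ + L x̄ − Du ∈ B η, −L*û − C x̂ ∈ A x̂, and L x̂ − D û ∈ B û. Then ‖x − x̂‖²/τ + ‖u − û‖²/γ ≥ (2ρ + 1/τ)‖p − x̂‖² + (2χ + 1/γ)‖η − û‖² + 2(⟨L(p − x̂), w − û⟩ − ⟨L(x̄ − x̂), η − û⟩) + (1/γ − 1/(2δ))‖η − u‖² + (1/τ − 1/(2β))‖p − x‖². -/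
/-!
Subtracting the inclusions at `p` and `xhat` (resp. `η` and `uhat`) and applying strong
monotonicity gives one inequality per block. In it, `2⟪p - xhat, x - p⟫` is expanded by the
three-point identity, and the forward term `⟪p - xhat, C x - C xhat⟫` is bounded below through
cocoercivity and Young's inequality at the price `‖p - x‖² / (2β)`. Moving `L†` across the inner
product and adding the primal and dual estimates gives the claim.
-/

open RealInnerProductSpace

section StrongMonotoneCocoercive

variable {E : Type*} [NormedAddCommGroup E] [InnerProductSpace ℝ E]

def IsStronglyMonotone (ρ : ℝ) (A : E → Set E) : Prop :=
  ∀ x y u v, u ∈ A x → v ∈ A y → ρ * ‖x - y‖ ^ 2 ≤ ⟪x - y, u - v⟫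

def IsCocoercive (β : ℝ) (C : E → E) : Prop :=
  ∀ x y, β * ‖C x - C y‖ ^ 2 ≤ ⟪C x - C y, x - y⟫

theorem two_inner_sub_sub_eq (x y z : E) :
    2 * ⟪z - y, x - z⟫ = ‖x - y‖ ^ 2 - ‖z - y‖ ^ 2 - ‖z - x‖ ^ 2 := by
  rw [show x - y = (z - y) + (x - z) by abel, norm_add_sq_real, norm_sub_rev z x]
  ring

/-- Split `z - y = (x - y) + (z - x)`; Young's inequality gives `β c ^ 2 - c d ≥ -d ^ 2 / (4 β)`. -/
theorem IsCocoercive.neg_norm_sq_div_le_two_inner {β : ℝ} {C : E → E} (hC : IsCocoercive β C)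
    (hβ : 0 < β) (x y z : E) :
    -(‖z - x‖ ^ 2 / (2 * β)) ≤ 2 * ⟪z - y, C x - C y⟫ := by
  have hsplit : ⟪z - y, C x - C y⟫ = ⟪C x - C y, x - y⟫ + ⟪C x - C y, z - x⟫ := by
    rw [real_inner_comm, ← inner_add_right, sub_add_sub_cancel']
  have hcs : -(‖C x - C y‖ * ‖z - x‖) ≤ ⟪C x - C y, z - x⟫ :=
    neg_le_of_abs_le (abs_real_inner_le_norm _ _)
  rw [hsplit, neg_le, le_div_iff₀ (by positivity)]
  nlinarith [sq_nonneg (2 * β * ‖C x - C y‖ - ‖z - x‖), hC x y]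

theorem forward_backward_step_le {ρ β τ : ℝ} {A : E → Set E} {C : E → E}
    (hA : IsStronglyMonotone ρ A) (hC : IsCocoercive β C) (hβ : 0 < β)
    {x p xhat e a b : E} (ha : a ∈ A p) (hb : b ∈ A xhat)
    (hab : a - b = τ⁻¹ • (x - p) + e - (C x - C xhat)) :
    (2 * ρ + 1 / τ) * ‖p - xhat‖ ^ 2 - 2 * ⟪p - xhat, e⟫ + (1 / τ - 1 / (2 * β)) * ‖p - x‖ ^ 2
      ≤ ‖x - xhat‖ ^ 2 / τ := by
  have hmono := hA p xhat a b ha hb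
  rw [hab, inner_sub_right, inner_add_right, real_inner_smul_right] at hmono
  have hpol := two_inner_sub_sub_eq x xhat p
  have hcoco := hC.neg_norm_sq_div_le_two_inner hβ x xhat p
  linear_combination 2 * hmono + τ⁻¹ * hpol + hcoco

end StrongMonotoneCocoercive

theorem stmt_6_general {H G : Type*}
    [NormedAddCommGroup H] [InnerProductSpace ℝ H] [CompleteSpace H]
    [NormedAddCommGroup G] [InnerProductSpace ℝ G] [CompleteSpace G]
    (L : H →L[ℝ] G) (τ γ ρ χ β δ : ℝ)
    (hβ : 0 < β) (hδ : 0 < δ)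
    (A : H → Set H)
    (hA : ∀ x y u v, u ∈ A x → v ∈ A y → ρ * ‖x - y‖ ^ 2 ≤ ⟪x - y, u - v⟫)
    (B : G → Set G)
    (hB : ∀ x y u v, u ∈ B x → v ∈ B y → χ * ‖x - y‖ ^ 2 ≤ ⟪x - y, u - v⟫)
    (C : H → H) (hC : ∀ x y, β * ‖C x - C y‖ ^ 2 ≤ ⟪C x - C y, x - y⟫)
    (D : G → G) (hD : ∀ x y, δ * ‖D x - D y‖ ^ 2 ≤ ⟪D x - D y, x - y⟫)
    (x xb p xhat : H) (u η w uhat : G)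
    (h1 : τ⁻¹ • (x - p) - (ContinuousLinearMap.adjoint L) w - C x ∈ A p)
    (h2 : γ⁻¹ • (u - η) + L xb - D u ∈ B η)
    (h3 : -(ContinuousLinearMap.adjoint L) uhat - C xhat ∈ A xhat)
    (h4 : L xhat - D uhat ∈ B uhat) :
    ‖x - xhat‖ ^ 2 / τ + ‖u - uhat‖ ^ 2 / γ ≥
      (2 * ρ + 1 / τ) * ‖p - xhat‖ ^ 2 + (2 * χ + 1 / γ) * ‖η - uhat‖ ^ 2
      + 2 * (⟪L (p - xhat), w - uhat⟫ - ⟪L (xb - xhat), η - uhat⟫)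
      + (1 / γ - 1 / (2 * δ)) * ‖η - u‖ ^ 2
      + (1 / τ - 1 / (2 * β)) * ‖p - x‖ ^ 2 := by
  have primal := forward_backward_step_le hA hC hβ h1 h3
    (e := -(ContinuousLinearMap.adjoint L) (w - uhat)) (by rw [map_sub]; abel)
  have dual := forward_backward_step_le hB hD hδ h2 h4
    (e := L (xb - xhat)) (by rw [map_sub]; abel)
  rw [inner_neg_right, ContinuousLinearMap.adjoint_inner_right] at primal
  rw [real_inner_comm] at dual
  linarith

/-- One-step primal-dual inequality combining strong monotonicity of A and B
and cocoercivity of C and D. -/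
theorem stmt_6 {H G : Type*}
    [NormedAddCommGroup H] [InnerProductSpace ℝ H] [CompleteSpace H]
    [NormedAddCommGroup G] [InnerProductSpace ℝ G] [CompleteSpace G]
    (L : H →L[ℝ] G) (τ γ ρ χ β δ : ℝ)
    (hτ : 0 < τ) (hγ : 0 < γ) (hρ : 0 ≤ ρ) (hχ : 0 ≤ χ) (hβ : 0 < β) (hδ : 0 < δ)
    (A : H → Set H)
    (hA : ∀ x y u v, u ∈ A x → v ∈ A y → ρ * ‖x - y‖ ^ 2 ≤ ⟪x - y, u - v⟫)
    (B : G → Set G)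
    (hB : ∀ x y u v, u ∈ B x → v ∈ B y → χ * ‖x - y‖ ^ 2 ≤ ⟪x - y, u - v⟫)
    (C : H → H) (hC : ∀ x y, β * ‖C x - C y‖ ^ 2 ≤ ⟪C x - C y, x - y⟫)
    (D : G → G) (hD : ∀ x y, δ * ‖D x - D y‖ ^ 2 ≤ ⟪D x - D y, x - y⟫)
    (x xb p xhat : H) (u η w uhat : G)
    (h1 : τ⁻¹ • (x - p) - (ContinuousLinearMap.adjoint L) w - C x ∈ A p)
    (h2 : γ⁻¹ • (u - η) + L xb - D u ∈ B η)
    (h3 : -(ContinuousLinearMap.adjoint L) uhat - C xhat ∈ A xhat)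
    (h4 : L xhat - D uhat ∈ B uhat) :
    ‖x - xhat‖ ^ 2 / τ + ‖u - uhat‖ ^ 2 / γ ≥
      (2 * ρ + 1 / τ) * ‖p - xhat‖ ^ 2 + (2 * χ + 1 / γ) * ‖η - uhat‖ ^ 2
      + 2 * (⟪L (p - xhat), w - uhat⟫ - ⟪L (xb - xhat), η - uhat⟫)
      + (1 / γ - 1 / (2 * δ)) * ‖η - u‖ ^ 2
      + (1 / τ - 1 / (2 * β)) * ‖p - x‖ ^ 2 :=
  stmt_6_general L τ γ ρ χ β δ hβ hδ A hA B hB C hC D hD x xb p xhat u η w uhat h1 h2 h3 h4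
end

section
/- Let β, δ, τ, γ be positive reals and ℓ ≥ 0. If 2·min{1/γ, 1/τ}·(1 − √(τγℓ²))·min{β, δ} > 1, then (1/τ − 1/(2β))·(1/γ − 1/(2δ)) > ℓ². (That is, the step-size condition required by Vũ's algorithm implies the strict version of the parameter condition ‖L‖² ≤ (1/τ − 1/(2β))(1/γ − 1/(2δ)) used in this paper, with ℓ playing the role of ‖L‖.) -/
/-! With `s = √(τγℓ²)`, the hypothesis forces `s < 1`, and bounding the two minima by each of
their arguments gives `s / τ < 1/τ - 1/(2β)` and `s / γ < 1/γ - 1/(2δ)`. Multiplying these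
nonnegative strict bounds shows that the product exceeds `s² / (τγ) = ℓ²`. -/

lemma div_lt_inv_sub_inv_two_mul {m b s τ β : ℝ} (hτ : 0 < τ) (hβ : 0 < β) (hm : 0 ≤ m)
    (hs : s < 1) (hmτ : m ≤ 1 / τ) (hbβ : b ≤ β) (h : 1 < 2 * (m * (1 - s)) * b) :
    s / τ < 1 / τ - 1 / (2 * β) := by
  have hmono : 2 * (m * (1 - s)) * b ≤ 2 * (1 / τ * (1 - s)) * β := by
    have hb0 : 0 ≤ b := by nlinarith [mul_nonneg hm (sub_nonneg.2 hs.le)]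
    gcongr
  have hinv : 1 / (2 * β) < 1 / τ * (1 - s) := by
    rw [div_lt_iff₀ (by positivity)]
    linarith
  linarith [show 1 / τ * (1 - s) = 1 / τ - s / τ by ring]

theorem stmt_9_general (β δ τ γ ℓ : ℝ) (hβ : 0 < β) (hδ : 0 < δ) (hτ : 0 < τ) (hγ : 0 < γ)
    (h : 2 * (min (1 / γ) (1 / τ) * (1 - Real.sqrt (τ * γ * ℓ ^ 2))) * min β δ > 1) :
    (1 / τ - 1 / (2 * β)) * (1 / γ - 1 / (2 * δ)) > ℓ ^ 2 := by
  set s := Real.sqrt (τ * γ * ℓ ^ 2) with hs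
  have hm : 0 < min (1 / γ) (1 / τ) := lt_min (by positivity) (by positivity)
  have hs1 : s < 1 := by
    by_contra! hs1
    have : min (1 / γ) (1 / τ) * (1 - s) ≤ 0 := mul_nonpos_of_nonneg_of_nonpos hm.le (by linarith)
    nlinarith [lt_min hβ hδ]
  have kτ := div_lt_inv_sub_inv_two_mul hτ hβ hm.le hs1 (min_le_right _ _) (min_le_left _ _) h
  have kγ := div_lt_inv_sub_inv_two_mul hγ hδ hm.le hs1 (min_le_left _ _) (min_le_right _ _) h
  have hℓ : s / τ * (s / γ) = ℓ ^ 2 := by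
    rw [div_mul_div_comm, ← sq, hs, Real.sq_sqrt (by positivity)]
    field_simp
  rw [← hℓ]
  exact mul_lt_mul'' kτ kγ (by positivity) (by positivity)

/-- The step-size condition of Vũ's algorithm implies the strict version of
the parameter condition used in the paper. -/
theorem stmt_9 (β δ τ γ ℓ : ℝ) (hβ : 0 < β) (hδ : 0 < δ) (hτ : 0 < τ) (hγ : 0 < γ)
    (hℓ : 0 ≤ ℓ)
    (h : 2 * (min (1 / γ) (1 / τ) * (1 - Real.sqrt (τ * γ * ℓ ^ 2))) * min β δ > 1) :
    (1 / τ - 1 / (2 * β)) * (1 / γ - 1 / (2 * δ)) > ℓ ^ 2 :=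
  stmt_9_general β δ τ γ ℓ hβ hδ hτ hγ h
end

section
/- Let H and G be real Hilbert spaces and adopt the primal-dual algorithm setting with ρ > 0, χ = 0, D = 0, step sizes θ_k = 1/√(1 + 2ρτ_k), τ_{k+1} = θ_k τ_k, γ_{k+1} = γ_k/θ_k, τ₀ ∈ (0,2β), and γ₀ > 0 with γ₀ τ₀ ‖L‖² = 1 − τ₀/(2β). For every primal-dual solution (x̂, û), define Δ_k := ‖x^k − x̂‖²/τ_k + ‖u^k − û‖²/γ_k. Then for every integer k ≥ 1: Δ_k/τ_k ≥ Δ_{k+1}/τ_{k+1} + (1 − τ_k/(2β))·‖p^{k+1} − x^k‖²/τ_k² − (1 − τ_{k−1}/(2β))·‖p^k − x^{k−1}‖²/τ_{k−1}² + (2/τ_k)⟨L(p^{k+1} − x^k), η^{k+1} − û⟩ − (2/τ_{k−1})⟨L(p^k − x^{k−1}), η^k − û⟩. -/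
open RealInnerProductSpace

/-!
Testing the primal step against `x̂` (ρ-strong monotonicity of `A`) and the dual step against `û`
(monotonicity of `B`) gives two three-point inequalities whose coupling terms
`⟪L (x^k - x̂), η^{k+1} - û⟫` cancel. Cocoercivity of `C` absorbs `⟪p^{k+1} - x̂, C x^k - C x̂⟫`
into `‖p^{k+1} - x^k‖² / (4β)`, Young's inequality absorbs the extrapolation error
`θ_{k-1} ⟪L (p^k - x^{k-1}), η^{k+1} - u^k⟫`, and neither `T` nor `P_V` increases the distance to
`x̂`, resp. `û`. The step-size rule gives `(1 + 2ρτ_k) / τ_k² = 1 / τ_{k+1}²` and `γ_k τ_k = γ₀ τ₀`;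
since `τ_k` decreases, the parameter condition `γ₀ τ₀ ‖L‖² = 1 - τ₀ / (2β)` bounds the leftover
multiple of `‖p^k - x^{k-1}‖²` by the telescoping term.
-/

namespace PrimalDual

section Operators

variable {E : Type*} [NormedAddCommGroup E]

theorem norm_sub_sq_le_of_averaged {α : ℝ} (hα : α ∈ Set.Ioo (0 : ℝ) 1) {T : E → E}
    (hT : ∀ z y, T y = y → ‖T z - y‖ ^ 2 ≤ ‖z - y‖ ^ 2 - ((1 - α) / α) * ‖z - T z‖ ^ 2)
    {y : E} (hy : T y = y) (z : E) : ‖T z - y‖ ^ 2 ≤ ‖z - y‖ ^ 2 := by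
  have hcoef : 0 ≤ (1 - α) / α := div_nonneg (by linarith [hα.2]) hα.1.le
  nlinarith [hT z y hy, sq_nonneg ‖z - T z‖]

variable [InnerProductSpace ℝ E]

def IsStronglyMonotone (ρ : ℝ) (A : E → Set E) : Prop :=
  ∀ x y u v, u ∈ A x → v ∈ A y → ρ * ‖x - y‖ ^ 2 ≤ ⟪x - y, u - v⟫

def IsCocoercive (β : ℝ) (C : E → E) : Prop :=
  ∀ x y, β * ‖C x - C y‖ ^ 2 ≤ ⟪C x - C y, x - y⟫

theorem real_inner_sub_sub_eq (a b c : E) :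
    ⟪a - b, c - a⟫ = (‖c - b‖ ^ 2 - ‖a - b‖ ^ 2 - ‖c - a‖ ^ 2) / 2 := by
  have h := norm_add_sq_real (c - a) (a - b)
  rw [sub_add_sub_cancel] at h
  rw [real_inner_comm]
  linarith

theorem real_inner_le_mul_norm_sq_add {γ : ℝ} (hγ : 0 < γ) (a b : E) :
    ⟪a, b⟫ ≤ γ / 2 * ‖a‖ ^ 2 + ‖b‖ ^ 2 / (2 * γ) := by
  have h := norm_sub_sq_real (γ • a) b
  rw [real_inner_smul_left, norm_smul, mul_pow, Real.norm_eq_abs, sq_abs] at h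
  have hgap : γ / 2 * ‖a‖ ^ 2 + ‖b‖ ^ 2 / (2 * γ) - ⟪a, b⟫ = ‖γ • a - b‖ ^ 2 / (2 * γ) := by
    rw [h]; field_simp; ring
  have : 0 ≤ ‖γ • a - b‖ ^ 2 / (2 * γ) := by positivity
  linarith

theorem IsStronglyMonotone.resolvent_step {ρ τ : ℝ} {M : E → Set E} (hM : IsStronglyMonotone ρ M)
    {x p y w w' : E} (hp : τ⁻¹ • (x - p) + w ∈ M p) (hy : w' ∈ M y) :
    ρ * ‖p - y‖ ^ 2 ≤ (‖x - y‖ ^ 2 - ‖p - y‖ ^ 2 - ‖p - x‖ ^ 2) / (2 * τ) + ⟪p - y, w - w'⟫ := by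
  have h := hM p y _ _ hp hy
  rw [add_sub_assoc, inner_add_right, real_inner_smul_right, real_inner_sub_sub_eq,
    norm_sub_rev x p] at h
  rwa [inv_mul_eq_div, div_div] at h

theorem IsCocoercive.neg_inner_le {β : ℝ} {C : E → E} (hC : IsCocoercive β C) (hβ : 0 < β)
    (p x y : E) : -⟪p - y, C x - C y⟫ ≤ ‖p - x‖ ^ 2 / (4 * β) := by
  set d := C x - C y
  have hsplit : ⟪p - y, d⟫ = ⟪p - x, d⟫ + ⟪d, x - y⟫ := by
    rw [real_inner_comm (x - y) d, ← inner_add_left, sub_add_sub_cancel]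
  have hcs := (abs_le.mp (abs_real_inner_le_norm (p - x) d)).1
  rw [le_div_iff₀ (by positivity)]
  nlinarith [hC x y, sq_nonneg (‖p - x‖ - 2 * β * ‖d‖)]

theorem inner_starProjection_of_mem {V : Submodule ℝ E} [V.HasOrthogonalProjection] {w : E}
    (hw : w ∈ V) (v : E) : ⟪w, V.starProjection v⟫ = ⟪w, v⟫ := by
  rw [← V.inner_starProjection_left_eq_right, Submodule.starProjection_eq_self_iff.mpr hw]

theorem norm_starProjection_sub_le {V : Submodule ℝ E} [V.HasOrthogonalProjection] {v : E}
    (hv : v ∈ V) (u : E) : ‖V.starProjection u - v‖ ≤ ‖u - v‖ := by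
  calc ‖V.starProjection u - v‖ = ‖V.starProjection (u - v)‖ := by
        rw [map_sub, Submodule.starProjection_eq_self_iff.mpr hv]
    _ ≤ ‖u - v‖ := V.norm_starProjection_apply_le _

end Operators

structure AcceleratedStepSizes (ρ : ℝ) (θ τ γ : ℕ → ℝ) : Prop where
  tau_zero_pos : 0 < τ 0
  gamma_zero_pos : 0 < γ 0
  theta_eq : ∀ k, θ k = 1 / Real.sqrt (1 + 2 * ρ * τ k)
  tau_succ : ∀ k, τ (k + 1) = θ k * τ k
  gamma_succ : ∀ k, γ (k + 1) = γ k / θ k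

namespace AcceleratedStepSizes

variable {ρ : ℝ} {θ τ γ : ℕ → ℝ}

theorem tau_pos (h : AcceleratedStepSizes ρ θ τ γ) (hρ : 0 ≤ ρ) (k : ℕ) : 0 < τ k := by
  induction k with
  | zero => exact h.tau_zero_pos
  | succ n ih => rw [h.tau_succ, h.theta_eq]; positivity

theorem theta_pos (h : AcceleratedStepSizes ρ θ τ γ) (hρ : 0 ≤ ρ) (k : ℕ) : 0 < θ k := by
  have := h.tau_pos hρ k
  rw [h.theta_eq]
  positivity

theorem theta_le_one (h : AcceleratedStepSizes ρ θ τ γ) (hρ : 0 ≤ ρ) (k : ℕ) : θ k ≤ 1 := by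
  have := h.tau_pos hρ k
  rw [h.theta_eq, div_le_one (by positivity), Real.one_le_sqrt]
  nlinarith

theorem theta_sq_mul (h : AcceleratedStepSizes ρ θ τ γ) (hρ : 0 ≤ ρ) (k : ℕ) :
    θ k ^ 2 * (1 + 2 * ρ * τ k) = 1 := by
  have := h.tau_pos hρ k
  rw [h.theta_eq, div_pow, one_pow, Real.sq_sqrt (by positivity)]
  field_simp

theorem gamma_pos (h : AcceleratedStepSizes ρ θ τ γ) (hρ : 0 ≤ ρ) (k : ℕ) : 0 < γ k := by
  induction k with
  | zero => exact h.gamma_zero_pos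
  | succ n ih => rw [h.gamma_succ]; exact div_pos ih (h.theta_pos hρ n)

theorem gamma_mul_tau (h : AcceleratedStepSizes ρ θ τ γ) (hρ : 0 ≤ ρ) (k : ℕ) :
    γ k * τ k = γ 0 * τ 0 := by
  induction k with
  | zero => rfl
  | succ n ih =>
    have := (h.theta_pos hρ n).ne'
    rw [h.gamma_succ, h.tau_succ, ← ih]
    field_simp

theorem tau_antitone (h : AcceleratedStepSizes ρ θ τ γ) (hρ : 0 ≤ ρ) : Antitone τ :=
  antitone_nat_of_succ_le fun k ↦ by
    rw [h.tau_succ]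
    exact mul_le_of_le_one_left (h.tau_pos hρ k).le (h.theta_le_one hρ k)

theorem theta_sq_mul_gamma_div_tau_le (h : AcceleratedStepSizes ρ θ τ γ) (hρ : 0 ≤ ρ)
    {β M : ℝ} (hβ : 0 < β) (hpar : γ 0 * τ 0 * M = 1 - τ 0 / (2 * β)) (j : ℕ) :
    θ j ^ 2 * γ (j + 1) * M / τ (j + 1) ≤ (1 - τ j / (2 * β)) / τ j ^ 2 := by
  have hθ := (h.theta_pos hρ j).ne'
  have hτ := h.tau_pos hρ j
  have hrewrite : θ j ^ 2 * γ (j + 1) * M / τ (j + 1) = γ j * τ j * M / τ j ^ 2 := by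
    rw [h.gamma_succ, h.tau_succ]
    field_simp
  have hτle : τ j / (2 * β) ≤ τ 0 / (2 * β) := by
    gcongr
    exact h.tau_antitone hρ (Nat.zero_le j)
  rw [hrewrite, h.gamma_mul_tau hρ, hpar]
  gcongr

theorem energy_recursion (h : AcceleratedStepSizes ρ θ τ γ) (hρ : 0 ≤ ρ) {β M : ℝ} (hβ : 0 < β)
    (hpar : γ 0 * τ 0 * M = 1 - τ 0 / (2 * β)) (j : ℕ) {a₁ a₂ a₃ a₄ b₁ b₂ b₄ d s₀ s₁ : ℝ}
    (hdescent : ρ * a₂ + s₁ - θ j * s₀ ≤ (a₁ - a₂ - a₃) / (2 * τ (j + 1))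
      + (b₁ - b₂) / (2 * γ (j + 1)) + θ j ^ 2 * γ (j + 1) * M / 2 * d + a₃ / (4 * β))
    (ha : a₄ ≤ a₂) (hb : b₄ ≤ b₂) (hd : 0 ≤ d) :
    (a₁ / τ (j + 1) + b₁ / γ (j + 1)) / τ (j + 1) ≥
      (a₄ / τ (j + 1 + 1) + b₄ / γ (j + 1 + 1)) / τ (j + 1 + 1)
      + (1 - τ (j + 1) / (2 * β)) * a₃ / τ (j + 1) ^ 2
      - (1 - τ j / (2 * β)) * d / τ j ^ 2
      + 2 / τ (j + 1) * s₁ - 2 / τ j * s₀ := by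
  have hcoef := h.theta_sq_mul_gamma_div_tau_le hρ hβ hpar j
  have hθ := h.theta_pos hρ j
  have hτ := h.tau_pos hρ (j + 1)
  have hγ := h.gamma_pos hρ (j + 1)
  have hτ' := h.tau_pos hρ (j + 1 + 1)
  have hγ' := h.gamma_pos hρ (j + 1 + 1)
  have hθ' := h.theta_pos hρ (j + 1)
  have hτ_prev : τ j = τ (j + 1) / θ j := by rw [h.tau_succ]; field_simp
  have hnext : (a₄ / τ (j + 1 + 1) + b₄ / γ (j + 1 + 1)) / τ (j + 1 + 1) =
      (1 + 2 * ρ * τ (j + 1)) / τ (j + 1) ^ 2 * a₄ + b₄ / (γ (j + 1) * τ (j + 1)) := by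
    have hsq := h.theta_sq_mul hρ (j + 1)
    rw [h.gamma_succ, h.tau_succ (j + 1)]
    field_simp
    linear_combination (-(a₄ * γ (j + 1))) * hsq
  have hgap : 0 ≤ 2 / τ (j + 1) * ((a₁ - a₂ - a₃) / (2 * τ (j + 1)) + (b₁ - b₂) / (2 * γ (j + 1))
      + θ j ^ 2 * γ (j + 1) * M / 2 * d + a₃ / (4 * β) - (ρ * a₂ + s₁ - θ j * s₀)) :=
    mul_nonneg (by positivity) (by linarith)
  have hprimal : 0 ≤ (1 + 2 * ρ * τ (j + 1)) / τ (j + 1) ^ 2 * (a₂ - a₄) :=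
    mul_nonneg (by positivity) (by linarith)
  have hdual : 0 ≤ (b₂ - b₄) / (γ (j + 1) * τ (j + 1)) := div_nonneg (by linarith) (by positivity)
  have hextra : 0 ≤ ((1 - τ j / (2 * β)) / τ j ^ 2 - θ j ^ 2 * γ (j + 1) * M / τ (j + 1)) * d :=
    mul_nonneg (by linarith) hd
  have hsplit : (a₁ / τ (j + 1) + b₁ / γ (j + 1)) / τ (j + 1) -
      ((1 + 2 * ρ * τ (j + 1)) / τ (j + 1) ^ 2 * a₄ + b₄ / (γ (j + 1) * τ (j + 1))
        + (1 - τ (j + 1) / (2 * β)) * a₃ / τ (j + 1) ^ 2 - (1 - τ j / (2 * β)) * d / τ j ^ 2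
        + 2 / τ (j + 1) * s₁ - 2 / τ j * s₀) =
      2 / τ (j + 1) * ((a₁ - a₂ - a₃) / (2 * τ (j + 1)) + (b₁ - b₂) / (2 * γ (j + 1))
        + θ j ^ 2 * γ (j + 1) * M / 2 * d + a₃ / (4 * β) - (ρ * a₂ + s₁ - θ j * s₀))
      + (1 + 2 * ρ * τ (j + 1)) / τ (j + 1) ^ 2 * (a₂ - a₄)
      + (b₂ - b₄) / (γ (j + 1) * τ (j + 1))
      + ((1 - τ j / (2 * β)) / τ j ^ 2 - θ j ^ 2 * γ (j + 1) * M / τ (j + 1)) * d := by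
    rw [hτ_prev]
    field_simp
    ring
  rw [ge_iff_le, hnext]
  linarith

end AcceleratedStepSizes

section Algorithm

variable {H G : Type*} [NormedAddCommGroup H] [InnerProductSpace ℝ H] [CompleteSpace H]
  [NormedAddCommGroup G] [InnerProductSpace ℝ G] [CompleteSpace G]

theorem descent_inequality {V : Submodule ℝ G} [V.HasOrthogonalProjection] (L : H →L[ℝ] G)
    (hran : ∀ z, L z ∈ V) {ρ β : ℝ} (hβ : 0 < β) {A : H → Set H} {B : G → Set G} {C : H → H}
    (hA : IsStronglyMonotone ρ A) (hB : IsStronglyMonotone 0 B) (hC : IsCocoercive β C)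
    {θ τ γ : ℝ} (hγ : 0 < γ) {x₀ p₀ x p xb xhat : H} {u₀ u η₀ η uhat : G}
    (hu₀ : u₀ = V.starProjection η₀) (hu : u = V.starProjection η)
    (hxb : xb = x + θ • (p₀ - x₀))
    (hdual : γ⁻¹ • (u₀ - η) + L xb ∈ B η)
    (hprimal : τ⁻¹ • (x - p) - ContinuousLinearMap.adjoint L u - C x ∈ A p)
    (hAsol : -ContinuousLinearMap.adjoint L uhat - C xhat ∈ A xhat) (hBsol : L xhat ∈ B uhat) :
    ρ * ‖p - xhat‖ ^ 2 + ⟪L (p - x), η - uhat⟫ - θ * ⟪L (p₀ - x₀), η₀ - uhat⟫ ≤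
      (‖x - xhat‖ ^ 2 - ‖p - xhat‖ ^ 2 - ‖p - x‖ ^ 2) / (2 * τ)
      + (‖u₀ - uhat‖ ^ 2 - ‖η - uhat‖ ^ 2) / (2 * γ)
      + θ ^ 2 * γ * ‖L‖ ^ 2 / 2 * ‖p₀ - x₀‖ ^ 2 + ‖p - x‖ ^ 2 / (4 * β) := by
  have hproj : ∀ z, ⟪L z, u - uhat⟫ = ⟪L z, η - uhat⟫ := fun z ↦ by
    rw [inner_sub_right, inner_sub_right, hu, inner_starProjection_of_mem (hran z)]
  have hprimal' := hA.resolvent_step (w := -ContinuousLinearMap.adjoint L u - C x)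
    (by convert hprimal using 1; abel) hAsol
  have hprimal_inner : ⟪p - xhat, (-ContinuousLinearMap.adjoint L u - C x)
      - (-ContinuousLinearMap.adjoint L uhat - C xhat)⟫ =
      -⟪L (p - x), η - uhat⟫ - ⟪L (x - xhat), η - uhat⟫ - ⟪p - xhat, C x - C xhat⟫ := by
    rw [show (-ContinuousLinearMap.adjoint L u - C x) - (-ContinuousLinearMap.adjoint L uhat - C xhat)
        = -ContinuousLinearMap.adjoint L (u - uhat) - (C x - C xhat) by rw [map_sub]; abel,
      inner_sub_right, inner_neg_right, ContinuousLinearMap.adjoint_inner_right, hproj,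
      ← sub_add_sub_cancel p x xhat, map_add, inner_add_left]
    ring
  have hdual' := hB.resolvent_step hdual hBsol
  have hdual_inner : ⟪η - uhat, L xb - L xhat⟫ = ⟪L (x - xhat), η - uhat⟫
      + θ * ⟪L (p₀ - x₀), η₀ - uhat⟫ + θ * ⟪L (p₀ - x₀), η - u₀⟫ := by
    have hη₀ : ⟪L (p₀ - x₀), u₀⟫ = ⟪L (p₀ - x₀), η₀⟫ := by
      rw [hu₀, inner_starProjection_of_mem (hran _)]
    rw [← map_sub, hxb, add_sub_right_comm, map_add, map_smul, real_inner_comm, inner_add_left,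
      real_inner_smul_left, inner_sub_right (L (p₀ - x₀)) η u₀, hη₀]
    simp only [inner_sub_right]
    ring
  have hyoung : θ * ⟪L (p₀ - x₀), η - u₀⟫ ≤
      θ ^ 2 * γ * ‖L‖ ^ 2 / 2 * ‖p₀ - x₀‖ ^ 2 + ‖η - u₀‖ ^ 2 / (2 * γ) := by
    have hL : ‖L (p₀ - x₀)‖ ^ 2 ≤ ‖L‖ ^ 2 * ‖p₀ - x₀‖ ^ 2 := by
      rw [← mul_pow]
      exact pow_le_pow_left₀ (norm_nonneg _) (L.le_opNorm _) 2
    have h := real_inner_le_mul_norm_sq_add hγ (θ • L (p₀ - x₀)) (η - u₀)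
    rw [real_inner_smul_left, norm_smul, mul_pow, Real.norm_eq_abs, sq_abs] at h
    have := mul_le_mul_of_nonneg_left hL (by positivity : 0 ≤ γ / 2 * θ ^ 2)
    linarith
  have hcoco := hC.neg_inner_le hβ p x xhat
  rw [hprimal_inner] at hprimal'
  rw [hdual_inner, zero_mul] at hdual'
  have hsplit : (‖u₀ - uhat‖ ^ 2 - ‖η - uhat‖ ^ 2 - ‖η - u₀‖ ^ 2) / (2 * γ) =
      (‖u₀ - uhat‖ ^ 2 - ‖η - uhat‖ ^ 2) / (2 * γ) - ‖η - u₀‖ ^ 2 / (2 * γ) := by ring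
  linarith

end Algorithm

end PrimalDual

theorem stmt_16_general {H G : Type*}
    [NormedAddCommGroup H] [InnerProductSpace ℝ H] [CompleteSpace H]
    [NormedAddCommGroup G] [InnerProductSpace ℝ G] [CompleteSpace G]
    (V : Submodule ℝ G) [CompleteSpace V]
    (L : H →L[ℝ] G) (hran : ∀ z, L z ∈ V)
    (ρ β : ℝ) (hρ : 0 < ρ) (hβ : 0 < β)
    (A : H → Set H)
    (hA : ∀ x y u v, u ∈ A x → v ∈ A y → ρ * ‖x - y‖ ^ 2 ≤ ⟪x - y, u - v⟫)
    (B : G → Set G)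
    (hB : ∀ x y u v, u ∈ B x → v ∈ B y → 0 ≤ ⟪x - y, u - v⟫)
    (C : H → H) (hC : ∀ x y, β * ‖C x - C y‖ ^ 2 ≤ ⟪C x - C y, x - y⟫)
    (α : ℝ) (hα : α ∈ Set.Ioo (0 : ℝ) 1)
    (T : H → H)
    (hT : ∀ z y, T y = y → ‖T z - y‖ ^ 2 ≤ ‖z - y‖ ^ 2 - ((1 - α) / α) * ‖z - T z‖ ^ 2)
    (θ τ' γ' : ℕ → ℝ)
    (hτ0 : τ' 0 ∈ Set.Ioo (0 : ℝ) (2 * β)) (hγ0 : 0 < γ' 0)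
    (hθdef : ∀ k, θ k = 1 / Real.sqrt (1 + 2 * ρ * τ' k))
    (hτrec : ∀ k, τ' (k + 1) = θ k * τ' k)
    (hγrec : ∀ k, γ' (k + 1) = γ' k / θ k)
    (hpar : γ' 0 * τ' 0 * ‖L‖ ^ 2 = 1 - τ' 0 / (2 * β))
    (x p xb : ℕ → H) (u η : ℕ → G)
    (halg1 : ∀ k, (γ' k)⁻¹ • (u k - η (k + 1)) + L (xb k) ∈ B (η (k + 1)))
    (halg2 : ∀ k, u (k + 1) = (Submodule.orthogonalProjection V (η (k + 1)) : G))
    (halg3 : ∀ k, (τ' k)⁻¹ • (x k - p (k + 1))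
        - (ContinuousLinearMap.adjoint L) (u (k + 1)) - C (x k) ∈ A (p (k + 1)))
    (halg4 : ∀ k, x (k + 1) = T (p (k + 1)))
    (halg5 : ∀ k, xb (k + 1) = x (k + 1) + θ k • (p (k + 1) - x k)) :
    ∀ (xhat : H) (uhat : G), T xhat = xhat → uhat ∈ V →
      -(ContinuousLinearMap.adjoint L) uhat - C xhat ∈ A xhat →
      L xhat ∈ B uhat →
      ∀ k : ℕ, 1 ≤ k →
        (‖x k - xhat‖ ^ 2 / τ' k + ‖u k - uhat‖ ^ 2 / γ' k) / τ' k ≥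
          (‖x (k + 1) - xhat‖ ^ 2 / τ' (k + 1) + ‖u (k + 1) - uhat‖ ^ 2 / γ' (k + 1))
              / τ' (k + 1)
          + (1 - τ' k / (2 * β)) * ‖p (k + 1) - x k‖ ^ 2 / τ' k ^ 2
          - (1 - τ' (k - 1) / (2 * β)) * ‖p k - x (k - 1)‖ ^ 2 / τ' (k - 1) ^ 2
          + (2 / τ' k) * ⟪L (p (k + 1) - x k), η (k + 1) - uhat⟫
          - (2 / τ' (k - 1)) * ⟪L (p k - x (k - 1)), η k - uhat⟫ := by
  intro xhat uhat hfix huhat hAsol hBsol k hk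
  obtain ⟨j, rfl⟩ : ∃ j, k = j + 1 := ⟨k - 1, by omega⟩
  rw [Nat.add_sub_cancel]
  have hs : PrimalDual.AcceleratedStepSizes ρ θ τ' γ' := ⟨hτ0.1, hγ0, hθdef, hτrec, hγrec⟩
  have hBmono : PrimalDual.IsStronglyMonotone 0 B := fun x y u v hu hv ↦ by
    simpa using hB x y u v hu hv
  refine hs.energy_recursion hρ.le hβ hpar j (a₂ := ‖p (j + 1 + 1) - xhat‖ ^ 2)
    (b₂ := ‖η (j + 1 + 1) - uhat‖ ^ 2) ?_ ?_ ?_ (sq_nonneg _)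
  · exact PrimalDual.descent_inequality L hran hβ hA hBmono hC (hs.gamma_pos hρ.le (j + 1))
      (halg2 j) (halg2 (j + 1)) (halg5 j) (halg1 (j + 1)) (halg3 (j + 1)) hAsol hBsol
  · rw [halg4]
    exact PrimalDual.norm_sub_sq_le_of_averaged hα hT hfix _
  · rw [halg2]
    exact pow_le_pow_left₀ (norm_nonneg _) (PrimalDual.norm_starProjection_sub_le huhat _) 2

/-- One-step recursion for Δ_k = ‖x^k − x̂‖²/τ_k + ‖u^k − û‖²/γ_k in the
accelerated (ρ > 0, χ = 0, D = 0) setting, for k ≥ 1. -/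
theorem stmt_16 {H G : Type*}
    [NormedAddCommGroup H] [InnerProductSpace ℝ H] [CompleteSpace H]
    [NormedAddCommGroup G] [InnerProductSpace ℝ G] [CompleteSpace G]
    (V : Submodule ℝ G) [CompleteSpace V]
    (L : H →L[ℝ] G) (hL0 : L ≠ 0) (hran : ∀ z, L z ∈ V)
    (ρ β : ℝ) (hρ : 0 < ρ) (hβ : 0 < β)
    (A : H → Set H)
    (hA : ∀ x y u v, u ∈ A x → v ∈ A y → ρ * ‖x - y‖ ^ 2 ≤ ⟪x - y, u - v⟫)
    (B : G → Set G)
    (hB : ∀ x y u v, u ∈ B x → v ∈ B y → 0 ≤ ⟪x - y, u - v⟫)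
    (C : H → H) (hC : ∀ x y, β * ‖C x - C y‖ ^ 2 ≤ ⟪C x - C y, x - y⟫)
    (α : ℝ) (hα : α ∈ Set.Ioo (0 : ℝ) 1)
    (T : H → H) (hTfix : ∃ z, T z = z)
    (hT : ∀ z y, T y = y → ‖T z - y‖ ^ 2 ≤ ‖z - y‖ ^ 2 - ((1 - α) / α) * ‖z - T z‖ ^ 2)
    (θ τ' γ' : ℕ → ℝ)
    (hτ0 : τ' 0 ∈ Set.Ioo (0 : ℝ) (2 * β)) (hγ0 : 0 < γ' 0)
    (hθdef : ∀ k, θ k = 1 / Real.sqrt (1 + 2 * ρ * τ' k))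
    (hτrec : ∀ k, τ' (k + 1) = θ k * τ' k)
    (hγrec : ∀ k, γ' (k + 1) = γ' k / θ k)
    (hpar : γ' 0 * τ' 0 * ‖L‖ ^ 2 = 1 - τ' 0 / (2 * β))
    (x p xb : ℕ → H) (u η : ℕ → G)
    (hxb0 : xb 0 = x 0)
    (halg1 : ∀ k, (γ' k)⁻¹ • (u k - η (k + 1)) + L (xb k) ∈ B (η (k + 1)))
    (halg2 : ∀ k, u (k + 1) = (Submodule.orthogonalProjection V (η (k + 1)) : G))
    (halg3 : ∀ k, (τ' k)⁻¹ • (x k - p (k + 1))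
        - (ContinuousLinearMap.adjoint L) (u (k + 1)) - C (x k) ∈ A (p (k + 1)))
    (halg4 : ∀ k, x (k + 1) = T (p (k + 1)))
    (halg5 : ∀ k, xb (k + 1) = x (k + 1) + θ k • (p (k + 1) - x k)) :
    ∀ (xhat : H) (uhat : G), T xhat = xhat → uhat ∈ V →
      -(ContinuousLinearMap.adjoint L) uhat - C xhat ∈ A xhat →
      L xhat ∈ B uhat →
      ∀ k : ℕ, 1 ≤ k →
        (‖x k - xhat‖ ^ 2 / τ' k + ‖u k - uhat‖ ^ 2 / γ' k) / τ' k ≥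
          (‖x (k + 1) - xhat‖ ^ 2 / τ' (k + 1) + ‖u (k + 1) - uhat‖ ^ 2 / γ' (k + 1))
              / τ' (k + 1)
          + (1 - τ' k / (2 * β)) * ‖p (k + 1) - x k‖ ^ 2 / τ' k ^ 2
          - (1 - τ' (k - 1) / (2 * β)) * ‖p k - x (k - 1)‖ ^ 2 / τ' (k - 1) ^ 2
          + (2 / τ' k) * ⟪L (p (k + 1) - x k), η (k + 1) - uhat⟫
          - (2 / τ' (k - 1)) * ⟪L (p k - x (k - 1)), η k - uhat⟫ :=
  stmt_16_general V L hran ρ β hρ hβ A hA B hB C hC α hα T hT θ τ' γ' hτ0 hγ0 hθdef hτrec hγrec hpar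
    x p xb u η halg1 halg2 halg3 halg4 halg5
end
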